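/- arXiv:2512.18378 — 5 statements merged into one kernel-verified Lean document; each statement's English description precedes it below -/
import Mathlib

section
/- Let r ≥ 1 and let G be a strong r-central 2-tree on n vertices with maximum degree Δ and tail set {2,3}. Then (n + 3r − 6)/r ≤ Δ ≤ (2n + 2r − 6)/r, and moreover Δ ≤ n − 1. -/
open SimpleGraph

/-- `IsTwoTree G` : `G` is a 2-tree, i.e. it can be built recursively starting from the
complete graph `K₃` by repeatedly adding a new vertex adjacent exactly to the two
endpoints of an existing edge.  This is encoded via a construction ordering of the
vertices: the first three vertices form a triangle, and every later vertex has exactly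
two earlier neighbors, which are adjacent. -/
def IsTwoTree {V : Type} [Fintype V] (G : SimpleGraph V) : Prop :=
  3 ≤ Fintype.card V ∧
  ∃ e : Fin (Fintype.card V) ≃ V,
    (∀ i j : Fin (Fintype.card V), i.val < 3 → j.val < 3 → i ≠ j → G.Adj (e i) (e j)) ∧
    (∀ k : Fin (Fintype.card V), 3 ≤ k.val →
      ∃ i j : Fin (Fintype.card V), i.val < k.val ∧ j.val < k.val ∧ i ≠ j ∧
        G.Adj (e i) (e j) ∧
        ∀ m : Fin (Fintype.card V), m.val < k.val →
          (G.Adj (e k) (e m) ↔ m = i ∨ m = j))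

/-- The degree of a vertex. -/
noncomputable def gdeg {V : Type} [Fintype V] (G : SimpleGraph V) (v : V) : ℕ :=
  (G.neighborSet v).ncard

/-- `IsStrongCentral G r Δ` : `G` is a strong `r`-central 2-tree with maximum degree `Δ`
and tail set `{2,3}` :  `G` is a 2-tree, `Δ` is the maximum degree, exactly `r` vertices
have degree `Δ`, these `r` core vertices induce a complete graph, and every remaining
(tail) vertex has degree 2 or 3. -/
def IsStrongCentral {V : Type} [Fintype V] (G : SimpleGraph V) (r Δ : ℕ) : Prop :=
  IsTwoTree G ∧
  (∀ v, gdeg G v ≤ Δ) ∧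
  ({v | gdeg G v = Δ}).ncard = r ∧
  (∀ u v, gdeg G u = Δ → gdeg G v = Δ → u ≠ v → G.Adj u v) ∧
  (∀ v, gdeg G v ≠ Δ → gdeg G v = 2 ∨ gdeg G v = 3)

/-- The number `x` of tail vertices of degree 3. -/
noncomputable def tail3 {V : Type} [Fintype V] (G : SimpleGraph V) (Δ : ℕ) : ℕ :=
  ({v | gdeg G v ≠ Δ ∧ gdeg G v = 3}).ncard

/-- The number `y` of tail vertices of degree 2. -/
noncomputable def tail2 {V : Type} [Fintype V] (G : SimpleGraph V) (Δ : ℕ) : ℕ :=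
  ({v | gdeg G v ≠ Δ ∧ gdeg G v = 2}).ncard


open Finset in
private theorem gdeg_eq' {V : Type} [Fintype V] (G : SimpleGraph V) (v : V) [DecidableRel G.Adj] :
    gdeg G v = (univ.filter (fun u => G.Adj v u)).card := by
  rw [gdeg, Set.ncard_eq_toFinset_card']
  simp [SimpleGraph.neighborSet]
  congr 1; ext u; show u ∈ (G.neighborSet v).toFinset ↔ _; convert Set.mem_toFinset (s := G.neighborSet v) using 1; simp

open Finset in
private theorem card_fin_lt' (n m : ℕ) (h : m ≤ n) :
    (univ.filter fun i : Fin n => i.val < m).card = m := by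
  rw [show (univ.filter fun i : Fin n => i.val < m) = (Finset.range m).attachFin
    (fun x hx => lt_of_lt_of_le (Finset.mem_range.mp hx) h) from ?_,
    Finset.card_attachFin, Finset.card_range]
  ext i; simp

private theorem sum_min_range' (n : ℕ) (hn : 3 ≤ n) :
    ∑ j ∈ Finset.range n, min j 2 = 2 * n - 3 := by
  induction n with
  | zero => omega
  | succ m ih =>
    rcases Nat.lt_or_ge m 3 with hm | hm
    · have : m = 2 := by omega
      subst this; decide
    · rw [Finset.sum_range_succ, ih (by omega)]
      have : min m 2 = 2 := by omega
      omega

open Finset in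
private theorem degsum' {V : Type} [Fintype V] (G : SimpleGraph V) (h : IsTwoTree G) :
    ∑ v, gdeg G v + 6 = 4 * Fintype.card V := by
  classical
  obtain ⟨hn, ee, htri, hrec⟩ := h
  have h1 : ∑ v, gdeg G v = ∑ j : Fin (Fintype.card V),
      (univ.filter (fun i : Fin (Fintype.card V) => G.Adj (ee j) (ee i))).card := by
    rw [← Equiv.sum_comp ee (fun v => gdeg G v)]
    refine Finset.sum_congr rfl fun j _ => ?_
    rw [gdeg_eq']
    apply Finset.card_bij' (fun v _ => ee.symm v) (fun i _ => ee i) <;> simp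
  have hsplit : ∀ j : Fin (Fintype.card V),
      (univ.filter (fun i : Fin (Fintype.card V) => G.Adj (ee j) (ee i))).card
      = (univ.filter fun i : Fin (Fintype.card V) => i.val < j.val ∧ G.Adj (ee j) (ee i)).card
      + (univ.filter fun i : Fin (Fintype.card V) => j.val < i.val ∧ G.Adj (ee j) (ee i)).card := by
    intro j
    rw [← Finset.card_union_of_disjoint (by
      simp only [Finset.disjoint_left, mem_filter]
      rintro i ⟨-, h1, -⟩ ⟨-, h2, -⟩; omega)]
    congr 1
    ext i
    simp only [mem_filter, mem_univ, true_and, mem_union]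
    constructor
    · intro hadj
      have hne : i ≠ j := by rintro rfl; exact G.irrefl hadj
      have : i.val ≠ j.val := fun hh => hne (Fin.ext hh)
      rcases Nat.lt_or_ge i.val j.val with h' | h'
      · exact Or.inl ⟨h', hadj⟩
      · exact Or.inr ⟨by omega, hadj⟩
    · rintro (⟨-, hadj⟩ | ⟨-, hadj⟩) <;> exact hadj
  have hswap : ∑ j : Fin (Fintype.card V),
      (univ.filter fun i : Fin (Fintype.card V) => j.val < i.val ∧ G.Adj (ee j) (ee i)).card
      = ∑ j : Fin (Fintype.card V),
      (univ.filter fun i : Fin (Fintype.card V) => i.val < j.val ∧ G.Adj (ee j) (ee i)).card := by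
    simp only [Finset.card_filter]
    rw [Finset.sum_comm]
    simp only [SimpleGraph.adj_comm]
  have hA : ∀ j : Fin (Fintype.card V),
      (univ.filter fun i : Fin (Fintype.card V) => i.val < j.val ∧ G.Adj (ee j) (ee i)).card
      = min j.val 2 := by
    intro j
    by_cases hj : j.val < 3
    · have heq : (univ.filter fun i : Fin (Fintype.card V) => i.val < j.val ∧ G.Adj (ee j) (ee i))
          = univ.filter (fun i : Fin (Fintype.card V) => i.val < j.val) := by
        ext i
        simp only [mem_filter, mem_univ, true_and, and_iff_left_iff_imp]
        intro hlt
        exact htri j i hj (hlt.trans hj) (by rintro rfl; omega)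
      rw [heq, card_fin_lt' (Fintype.card V) j.val j.2.le]
      omega
    · obtain ⟨a, b, ha, hb, hab, -, hiff⟩ := hrec j (by omega)
      have heq : (univ.filter fun i : Fin (Fintype.card V) =>
          i.val < j.val ∧ G.Adj (ee j) (ee i)) = {a, b} := by
        ext i
        simp only [mem_filter, mem_univ, true_and, mem_insert, mem_singleton]
        constructor
        · rintro ⟨hlt, hadj⟩; exact (hiff i hlt).mp hadj
        · rintro (rfl | rfl)
          · exact ⟨ha, (hiff i ha).mpr (Or.inl rfl)⟩
          · exact ⟨hb, (hiff i hb).mpr (Or.inr rfl)⟩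
      rw [heq, Finset.card_pair hab]
      omega
  rw [h1]
  simp only [hsplit]
  rw [Finset.sum_add_distrib, hswap]
  simp only [hA]
  rw [← two_mul, Fin.sum_univ_eq_sum_range (fun j => min j 2) (Fintype.card V),
    sum_min_range' (Fintype.card V) hn]
  omega

open Finset in
private theorem partition' {V : Type} [Fintype V] (G : SimpleGraph V) (r Δ : ℕ)
    (hcore : ({v | gdeg G v = Δ}).ncard = r)
    (htail : ∀ v, gdeg G v ≠ Δ → gdeg G v = 2 ∨ gdeg G v = 3) :
    ∑ v, gdeg G v = r * Δ + 3 * tail3 G Δ + 2 * tail2 G Δ ∧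
    r + tail3 G Δ + tail2 G Δ = Fintype.card V := by
  classical
  set Sc := univ.filter (fun v => gdeg G v = Δ) with hSc
  set S3 := univ.filter (fun v => gdeg G v ≠ Δ ∧ gdeg G v = 3) with hS3
  set S2 := univ.filter (fun v => gdeg G v ≠ Δ ∧ gdeg G v = 2) with hS2
  have hr : Sc.card = r := by
    rw [← hcore, Set.ncard_eq_toFinset_card']; congr 1; ext v; simp [hSc]
  have h3 : S3.card = tail3 G Δ := by
    rw [tail3, Set.ncard_eq_toFinset_card']; congr 1; ext v; simp [hS3]
  have h2 : S2.card = tail2 G Δ := by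
    rw [tail2, Set.ncard_eq_toFinset_card']; congr 1; ext v; simp [hS2]
  have hdisj1 : Disjoint Sc S3 := by
    simp only [Finset.disjoint_left, hSc, hS3, mem_filter]; tauto
  have hdisj2 : Disjoint Sc S2 := by
    simp only [Finset.disjoint_left, hSc, hS2, mem_filter]; tauto
  have hdisj3 : Disjoint S3 S2 := by
    simp only [Finset.disjoint_left, hS3, hS2, mem_filter]
    rintro v ⟨-, -, h3'⟩ ⟨-, -, h2'⟩; omega
  have huniv : Sc ∪ S3 ∪ S2 = univ := by
    ext v
    simp only [mem_union, hSc, hS3, hS2, mem_filter, mem_univ, true_and, iff_true]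
    by_cases hv : gdeg G v = Δ
    · tauto
    · rcases htail v hv with h' | h' <;> tauto
  constructor
  · have hu : ∑ v, gdeg G v = ∑ v ∈ Sc, gdeg G v + ∑ v ∈ S3, gdeg G v + ∑ v ∈ S2, gdeg G v := by
      rw [← Finset.sum_union hdisj1, ← Finset.sum_union
        (by rw [Finset.disjoint_union_left]; exact ⟨hdisj2, hdisj3⟩), huniv]
    rw [hu]
    have e1 : ∑ v ∈ Sc, gdeg G v = r * Δ := by
      rw [Finset.sum_congr rfl (fun v hv => by simp only [hSc, mem_filter] at hv; exact hv.2),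
        Finset.sum_const, smul_eq_mul, hr]
    have e2 : ∑ v ∈ S3, gdeg G v = 3 * S3.card := by
      rw [Finset.sum_congr rfl (fun v hv => by simp only [hS3, mem_filter] at hv; exact hv.2.2),
        Finset.sum_const, smul_eq_mul, mul_comm]
    have e3 : ∑ v ∈ S2, gdeg G v = 2 * S2.card := by
      rw [Finset.sum_congr rfl (fun v hv => by simp only [hS2, mem_filter] at hv; exact hv.2.2),
        Finset.sum_const, smul_eq_mul, mul_comm]
    rw [e1, e2, e3, h3, h2]
  · rw [← hr, ← h3, ← h2, ← Finset.card_union_of_disjoint hdisj1,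
      ← Finset.card_union_of_disjoint (by rw [Finset.disjoint_union_left]; exact ⟨hdisj2, hdisj3⟩),
      huniv, Finset.card_univ]

open Finset in
private theorem gdeg_le' {V : Type} [Fintype V] (G : SimpleGraph V) (v : V) :
    gdeg G v ≤ Fintype.card V - 1 := by
  classical
  rw [gdeg_eq']
  calc (univ.filter (fun u => G.Adj v u)).card ≤ (univ.erase v).card := by
        apply Finset.card_le_card
        intro u hu
        simp only [mem_filter, mem_univ, true_and] at hu
        exact Finset.mem_erase.mpr ⟨fun hh => G.irrefl (hh ▸ hu), mem_univ u⟩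
    _ = Fintype.card V - 1 := by rw [Finset.card_erase_of_mem (mem_univ v), Finset.card_univ]

theorem stmt1 {V : Type} [Fintype V] (G : SimpleGraph V) (r Δ : ℕ)
    (hr : 1 ≤ r) (h : IsStrongCentral G r Δ) :
    ((Fintype.card V : ℚ) + 3 * (r : ℚ) - 6) / (r : ℚ) ≤ (Δ : ℚ) ∧
    (Δ : ℚ) ≤ (2 * (Fintype.card V : ℚ) + 2 * (r : ℚ) - 6) / (r : ℚ) ∧
    Δ ≤ Fintype.card V - 1 := by
  classical
  obtain ⟨htt, hmax, hcore, hcomplete, htail⟩ := h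
  have hn : 3 ≤ Fintype.card V := htt.1
  have hds := degsum' G htt
  obtain ⟨hsum, hcard⟩ := partition' G r Δ hcore htail
  set n := Fintype.card V
  set x := tail3 G Δ
  set y := tail2 G Δ
  have hNat : r * Δ + 3 * x + 2 * y + 6 = 4 * n := by omega
  have hQ1 : (r : ℚ) * Δ + 3 * x + 2 * y + 6 = 4 * n := by exact_mod_cast hNat
  have hQ2 : (r : ℚ) + x + y = n := by exact_mod_cast hcard
  have hrQ : (0 : ℚ) < r := by exact_mod_cast hr
  have hxQ : (0 : ℚ) ≤ x := Nat.cast_nonneg x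
  have hyQ : (0 : ℚ) ≤ y := Nat.cast_nonneg y
  refine ⟨?_, ?_, ?_⟩
  · rw [div_le_iff₀ hrQ]
    nlinarith [hQ1, hQ2, hxQ, hyQ]
  · rw [le_div_iff₀ hrQ]
    nlinarith [hQ1, hQ2, hxQ, hyQ]
  · have hne : ({v | gdeg G v = Δ}).Nonempty := by
      apply Set.nonempty_of_ncard_ne_zero
      rw [hcore]; omega
    obtain ⟨v, hv⟩ := hne
    calc Δ = gdeg G v := hv.symm
      _ ≤ n - 1 := gdeg_le' G v
end

section
/- For every n ≥ 5, there exists, up to isomorphism, exactly one strong 1-central (unicentral) 2-tree with tail set {2,3} on n vertices, namely the fan graph Φ_n; its degree sequence is (n−1, 3^(n−3), 2^(2)), i.e., one vertex of degree n−1, n−3 vertices of degree 3, and two vertices of degree 2. -/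
open SimpleGraph

/-- The fan graph `Φ_n` on `n` vertices: a path on `n-1` vertices (the vertices `1,…,n-1`)
together with a hub (vertex `0`) adjacent to every path vertex. -/
def fanGraph (n : ℕ) : SimpleGraph (Fin n) :=
  SimpleGraph.fromRel (fun u v => u.val = 0 ∨ u.val + 1 = v.val)

section Aux
open Fin
open SimpleGraph Fin

lemma fan_adj {n : ℕ} {u v : Fin n} :
    (fanGraph n).Adj u v ↔ u ≠ v ∧
      (u.val = 0 ∨ u.val + 1 = v.val ∨ v.val = 0 ∨ v.val + 1 = u.val) := by
  simp [fanGraph, SimpleGraph.fromRel]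
  tauto

instance {n : ℕ} : DecidableRel (fanGraph n).Adj := fun u v =>
  decidable_of_iff' _ fan_adj

lemma gdeg_iso {V W : Type} [Fintype V] [Fintype W] {G : SimpleGraph V}
    {H : SimpleGraph W} (f : G ≃g H) (v : V) : gdeg H (f v) = gdeg G v := by
  unfold gdeg
  rw [← Nat.card_coe_set_eq, ← Nat.card_coe_set_eq]
  exact Nat.card_congr (f.mapNeighborSet v).symm

lemma fan_nbhd_zero {n : ℕ} (hn : 1 ≤ n) (v : Fin n) (hv : v.val = 0) :
    (fanGraph n).neighborSet v = {v}ᶜ := by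
  ext u
  simp only [mem_neighborSet, fan_adj, Set.mem_compl_iff, Set.mem_singleton_iff]
  constructor
  · rintro ⟨h, -⟩ rfl; exact h rfl
  · intro h; exact ⟨fun hh => h hh.symm, Or.inl hv⟩

lemma fan_gdeg_zero {n : ℕ} (hn : 1 ≤ n) (v : Fin n) (hv : v.val = 0) :
    gdeg (fanGraph n) v = n - 1 := by
  unfold gdeg
  rw [fan_nbhd_zero hn v hv]
  have := Set.ncard_add_ncard_compl ({v} : Set (Fin n))
  simp [Set.ncard_singleton, Nat.card_eq_fintype_card] at this
  omega

lemma fan_gdeg_one {n : ℕ} (hn : 3 ≤ n) (v : Fin n) (hv : v.val = 1) :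
    gdeg (fanGraph n) v = 2 := by
  have hset : (fanGraph n).neighborSet v = {⟨0, by omega⟩, ⟨2, by omega⟩} := by
    ext u
    simp only [mem_neighborSet, fan_adj, Set.mem_insert_iff, Set.mem_singleton_iff,
      Fin.ext_iff, Ne]
    omega
  unfold gdeg
  rw [hset]
  exact Set.ncard_pair (by simp [Fin.ext_iff])

lemma fan_gdeg_last {n : ℕ} (hn : 3 ≤ n) (v : Fin n) (hv1 : v.val ≠ 1) (hv : v.val = n - 1) :
    gdeg (fanGraph n) v = 2 := by
  have hset : (fanGraph n).neighborSet v = {⟨0, by omega⟩, ⟨n-2, by omega⟩} := by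
    ext u
    simp only [mem_neighborSet, fan_adj, Set.mem_insert_iff, Set.mem_singleton_iff,
      Fin.ext_iff, Ne]
    omega
  unfold gdeg
  rw [hset]
  exact Set.ncard_pair (by simp [Fin.ext_iff]; omega)

lemma fan_gdeg_mid {n : ℕ} (v : Fin n) (h2 : 2 ≤ v.val) (hv : v.val ≤ n - 2) :
    gdeg (fanGraph n) v = 3 := by
  have hn : 4 ≤ n := by omega
  have hset : (fanGraph n).neighborSet v =
      {⟨0, by omega⟩, ⟨v.val - 1, by omega⟩, ⟨v.val + 1, by omega⟩} := by
    ext u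
    simp only [mem_neighborSet, fan_adj, Set.mem_insert_iff, Set.mem_singleton_iff,
      Fin.ext_iff, Ne]
    omega
  unfold gdeg
  rw [hset, Set.ncard_insert_of_notMem (by simp only [Set.mem_insert_iff, Set.mem_singleton_iff, Fin.ext_iff]; omega),
    Set.ncard_pair (by simp only [Ne, Fin.ext_iff]; omega)]

/-- summary -/
lemma fan_gdeg {n : ℕ} (hn : 3 ≤ n) (v : Fin n) :
    gdeg (fanGraph n) v = if v.val = 0 then n - 1 else
      if v.val = 1 ∨ v.val = n - 1 then 2 else 3 := by
  split_ifs with h1 h2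
  · exact fan_gdeg_zero (by omega) v h1
  · rcases h2 with h2 | h2
    · exact fan_gdeg_one hn v h2
    · rcases eq_or_ne v.val 1 with h | h
      · exact fan_gdeg_one hn v h
      · exact fan_gdeg_last hn v h h2
  · push_neg at h2
    exact fan_gdeg_mid v (by omega) (by have := v.isLt; omega)

/-- ordering with identity enumeration -/
def GOrd {n : ℕ} (G : SimpleGraph (Fin n)) : Prop :=
  (∀ i j : Fin n, i.val < 3 → j.val < 3 → i ≠ j → G.Adj i j) ∧
  (∀ k : Fin n, 3 ≤ k.val →
    ∃ i j : Fin n, i.val < k.val ∧ j.val < k.val ∧ i ≠ j ∧ G.Adj i j ∧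
      ∀ m : Fin n, m.val < k.val → (G.Adj k m ↔ m = i ∨ m = j))

lemma isTwoTree_of_ord {n : ℕ} (hn : 3 ≤ n) {G : SimpleGraph (Fin n)} (h : GOrd G) :
    IsTwoTree G := by
  have hc : Fintype.card (Fin n) = n := Fintype.card_fin n
  refine ⟨by omega, finCongr hc, ?_, ?_⟩
  · intro i j hi hj hij
    exact h.1 _ _ (by simpa) (by simpa) (by simpa [Fin.ext_iff] using hij)
  · intro k hk
    obtain ⟨i, j, hi, hj, hij, hadj, hm⟩ := h.2 (finCongr hc k) (by simpa)
    refine ⟨finCongr hc.symm i, finCongr hc.symm j, by simpa, by simpa, ?_, by simpa, ?_⟩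
    · simpa [Fin.ext_iff] using hij
    · intro m hm'
      have := hm (finCongr hc m) (by simpa)
      simpa [Fin.ext_iff] using this

lemma ord_of_isTwoTree {V : Type} [Fintype V] {G : SimpleGraph V} (h : IsTwoTree G) :
    ∃ e : Fin (Fintype.card V) ≃ V, GOrd (G.comap e) := by
  obtain ⟨-, e, h1, h2⟩ := h
  exact ⟨e, h1, h2⟩

lemma ord_fan {n : ℕ} (hn : 3 ≤ n) : GOrd (fanGraph n) := by
  constructor
  · intro i j hi hj hij
    rw [fan_adj]
    refine ⟨hij, ?_⟩
    rw [Ne, Fin.ext_iff] at hij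
    omega
  · intro k hk
    have hkn := k.isLt
    refine ⟨⟨0, by omega⟩, ⟨k.val - 1, by omega⟩, by simpa using (by omega : 0 < k.val),
      by simp; omega, by simp [Fin.ext_iff]; omega, ?_, ?_⟩
    · rw [fan_adj]
      constructor
      · simp [Fin.ext_iff]; omega
      · left; rfl
    · intro m hm
      rw [fan_adj]
      simp only [Fin.ext_iff, Ne]
      constructor
      · rintro ⟨h1, h2⟩; omega
      · rintro (h1 | h1) <;> constructor <;> omega

/-- fan n with an extra vertex (the last one) attached to the edge {c,d}. -/
def att (n : ℕ) (c d : Fin n) : SimpleGraph (Fin (n+1)) where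
  Adj x y := (∃ x' y' : Fin n, x = x'.castSucc ∧ y = y'.castSucc ∧ (fanGraph n).Adj x' y')
    ∨ (x = Fin.last n ∧ (y = c.castSucc ∨ y = d.castSucc))
    ∨ (y = Fin.last n ∧ (x = c.castSucc ∨ x = d.castSucc))
  symm := by
    constructor
    rintro x y (⟨x', y', rfl, rfl, h⟩ | ⟨rfl, h⟩ | ⟨rfl, h⟩)
    · exact Or.inl ⟨y', x', rfl, rfl, h.symm⟩
    · exact Or.inr (Or.inr ⟨rfl, h⟩)
    · exact Or.inr (Or.inl ⟨rfl, h⟩)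
  loopless := by
    constructor
    rintro x (⟨x', y', rfl, h, hadj⟩ | ⟨rfl, h | h⟩ | ⟨rfl, h | h⟩)
    · exact hadj.ne (castSucc_injective _ h)
    all_goals exact absurd h.symm (Fin.ne_last_of_lt (castSucc_lt_last _))
    
lemma castSucc_ne_last' {n : ℕ} (a : Fin n) : a.castSucc ≠ Fin.last n :=
  Fin.ne_last_of_lt (castSucc_lt_last _)

lemma att_adj {n : ℕ} {c d : Fin n} {x y : Fin (n+1)} :
    (att n c d).Adj x y ↔
      (∃ x' y' : Fin n, x = x'.castSucc ∧ y = y'.castSucc ∧ (fanGraph n).Adj x' y')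
      ∨ (x = Fin.last n ∧ (y = c.castSucc ∨ y = d.castSucc))
      ∨ (y = Fin.last n ∧ (x = c.castSucc ∨ x = d.castSucc)) := Iff.rfl

lemma att_adj_cast {n : ℕ} {c d : Fin n} {x y : Fin n} :
    (att n c d).Adj x.castSucc y.castSucc ↔ (fanGraph n).Adj x y := by
  rw [att_adj]
  constructor
  · rintro (⟨x', y', hx, hy, h⟩ | ⟨h, -⟩ | ⟨h, -⟩)
    · rwa [castSucc_injective _ hx, castSucc_injective _ hy]
    · exact absurd h (castSucc_ne_last' _)
    · exact absurd h (castSucc_ne_last' _)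
  · intro h; exact Or.inl ⟨x, y, rfl, rfl, h⟩

lemma att_adj_last {n : ℕ} {c d : Fin n} {x : Fin n} :
    (att n c d).Adj (Fin.last n) x.castSucc ↔ x = c ∨ x = d := by
  rw [att_adj]
  constructor
  · rintro (⟨x', y', hx, -, -⟩ | ⟨-, hy | hy⟩ | ⟨hy, -⟩)
    · exact absurd hx.symm (castSucc_ne_last' _)
    · exact Or.inl (castSucc_injective _ hy)
    · exact Or.inr (castSucc_injective _ hy)
    · exact absurd hy (castSucc_ne_last' _)
  · rintro (rfl | rfl)
    · exact Or.inr (Or.inl ⟨rfl, Or.inl rfl⟩)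
    · exact Or.inr (Or.inl ⟨rfl, Or.inr rfl⟩)

lemma att_comm {n : ℕ} (c d : Fin n) : att n c d = att n d c := by
  ext x y
  rw [att_adj, att_adj]
  refine or_congr Iff.rfl (or_congr ?_ ?_) <;> exact and_congr Iff.rfl or_comm

/-- transport an automorphism of the fan across att -/
def extE {n : ℕ} (g : Fin n ≃ Fin n) : Fin (n+1) ≃ Fin (n+1) :=
  finSuccEquivLast.trans ((Equiv.optionCongr g).trans finSuccEquivLast.symm)

@[simp] lemma extE_cast {n : ℕ} (g : Fin n ≃ Fin n) (x : Fin n) :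
    extE g x.castSucc = (g x).castSucc := by
  simp [extE]

@[simp] lemma extE_last {n : ℕ} (g : Fin n ≃ Fin n) :
    extE g (Fin.last n) = Fin.last n := by
  simp [extE]

def attCongr {n : ℕ} {c d : Fin n} (g : fanGraph n ≃g fanGraph n) :
    att n c d ≃g att n (g c) (g d) where
  toEquiv := extE g.toEquiv
  map_rel_iff' := by
    intro x y
    have hinj : Function.Injective g.toEquiv := g.toEquiv.injective
    induction x using Fin.lastCases with
    | last => induction y using Fin.lastCases with
      | last => exact iff_of_false ((att _ _ _).irrefl) ((att _ _ _).irrefl)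
      | cast y =>
        simp only [extE_last, extE_cast, att_adj_last]
        constructor
        · rintro (h | h)
          · exact Or.inl (hinj h)
          · exact Or.inr (hinj h)
        · rintro (rfl | rfl)
          · exact Or.inl rfl
          · exact Or.inr rfl
    | cast x => induction y using Fin.lastCases with
      | last =>
        rw [(att n (g c) (g d)).adj_comm, (att n c d).adj_comm]
        simp only [extE_last, extE_cast, att_adj_last]
        constructor
        · rintro (h | h)
          · exact Or.inl (hinj h)
          · exact Or.inr (hinj h)
        · rintro (rfl | rfl)
          · exact Or.inl rfl
          · exact Or.inr rfl
      | cast y =>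
        simp only [extE_cast, att_adj_cast]
        exact g.map_rel_iff
section P4
open SimpleGraph Fin

/-- reversal automorphism of the fan: hub fixed, path reversed. -/
def revF (n : ℕ) (i : Fin n) : Fin n :=
  if h : i.val = 0 then i else ⟨n - i.val, by omega⟩

lemma revF_val {n : ℕ} (i : Fin n) :
    (revF n i).val = if i.val = 0 then 0 else n - i.val := by
  unfold revF
  by_cases h : i.val = 0 <;> simp [h]

lemma revF_invol (n : ℕ) : Function.Involutive (revF n) := by
  intro i
  apply Fin.ext
  have hi := i.isLt
  rw [revF_val, revF_val]
  by_cases h : i.val = 0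
  · simp [h]
  · rw [if_neg h, if_neg (by omega)]
    omega

def revE (n : ℕ) : Fin n ≃ Fin n := (revF_invol n).toPerm

lemma revE_val {n : ℕ} (i : Fin n) :
    (revE n i).val = if i.val = 0 then 0 else n - i.val := revF_val i

def revIso (n : ℕ) : fanGraph n ≃g fanGraph n where
  toEquiv := revE n
  map_rel_iff' := by
    intro i j
    have hi := i.isLt
    have hj := j.isLt
    have h1 : (revE n i).val = if i.val = 0 then 0 else n - i.val := revE_val i
    have h2 : (revE n j).val = if j.val = 0 then 0 else n - j.val := revE_val j
    rw [fan_adj, fan_adj, Fin.ne_iff_vne, Fin.ne_iff_vne, h1, h2]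
    split_ifs <;> (constructor <;> (rintro ⟨hne, hcc⟩; exact ⟨by omega, by omega⟩))

lemma att_zero_last (n : ℕ) (hn : 1 ≤ n) (c d : Fin n) (hc : c.val = 0) (hd : d.val = n - 1) :
    att n c d = fanGraph (n+1) := by
  have hcv := c.isLt
  have hdv := d.isLt
  ext x y
  have hxv := x.isLt
  have hyv := y.isLt
  rw [att_adj, fan_adj, Fin.ne_iff_vne]
  constructor
  · rintro (⟨x', y', rfl, rfl, h⟩ | ⟨rfl, rfl | rfl⟩ | ⟨rfl, rfl | rfl⟩)
    · rw [fan_adj, Fin.ne_iff_vne] at h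
      obtain ⟨h1, h2⟩ := h
      simp only [coe_castSucc]
      exact ⟨h1, by omega⟩
    all_goals (simp only [coe_castSucc, val_last]; constructor <;> omega)
  · rintro ⟨hne, hcase⟩
    by_cases hx : x.val = n
    · have hxl : x = Fin.last n := Fin.ext hx
      subst hxl
      simp only [val_last] at hne hcase
      refine Or.inr (Or.inl ⟨rfl, ?_⟩)
      have hy0 : y.val = 0 ∨ y.val = n - 1 := by omega
      rcases hy0 with h | h
      · exact Or.inl (Fin.ext (by simp only [coe_castSucc]; omega))
      · exact Or.inr (Fin.ext (by simp only [coe_castSucc]; omega))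
    · by_cases hy : y.val = n
      · have hyl : y = Fin.last n := Fin.ext hy
        subst hyl
        simp only [val_last] at hne hcase
        refine Or.inr (Or.inr ⟨rfl, ?_⟩)
        have hx0 : x.val = 0 ∨ x.val = n - 1 := by omega
        rcases hx0 with h | h
        · exact Or.inl (Fin.ext (by simp only [coe_castSucc]; omega))
        · exact Or.inr (Fin.ext (by simp only [coe_castSucc]; omega))
      · refine Or.inl ⟨⟨x.val, by omega⟩, ⟨y.val, by omega⟩, Fin.ext rfl, Fin.ext rfl, ?_⟩
        rw [fan_adj, Fin.ne_iff_vne]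
        exact ⟨hne, hcase⟩

lemma att_iso_fan_01 (n : ℕ) (hn : 2 ≤ n) (c d : Fin n) (hc : c.val = 0) (hd : d.val = 1) :
    Nonempty (att n c d ≃g fanGraph (n+1)) := by
  have h1 : (revIso n c) = c := by
    rw [Fin.ext_iff]
    show (revE n c).val = c.val
    rw [revE_val, hc]; simp
  have h2 : ((revIso n d) : Fin n).val = n - 1 := by
    show (revE n d).val = n - 1
    rw [revE_val, hd]; simp
  have iso1 := attCongr (c := c) (d := d) (revIso n)
  rw [h1] at iso1
  rw [att_zero_last n (by omega) _ _ hc h2] at iso1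
  exact ⟨iso1⟩
section P5
open SimpleGraph Fin

def sw3 : fanGraph 3 ≃g fanGraph 3 where
  toEquiv := Equiv.swap 0 1
  map_rel_iff' := by intro a b; revert a b; decide

def sw4E : Fin 4 ≃ Fin 4 :=
  ⟨fun i => ![2,3,0,1] i, fun i => ![2,3,0,1] i, by decide, by decide⟩

def sw4 : fanGraph 4 ≃g fanGraph 4 where
  toEquiv := sw4E
  map_rel_iff' := by intro a b; revert a b; decide

lemma att_classify (n : ℕ) (hn : 3 ≤ n) (c d : Fin n) (hne : c ≠ d)
    (hcd : c.val = 0 ∨ c.val + 1 = d.val) :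
    Nonempty (att n c d ≃g fanGraph (n+1)) ∨
    ∃ u v : Fin n, u ≠ v ∧
      4 ≤ gdeg (fanGraph n) u + (if u = c ∨ u = d then 1 else 0) ∧
      4 ≤ gdeg (fanGraph n) v + (if v = c ∨ v = d then 1 else 0) := by
  have hcv := c.isLt
  have hdv := d.isLt
  have hnev : c.val ≠ d.val := fun h => hne (Fin.ext h)
  rcases hcd with hc0 | hsucc
  · -- c is the hub
    by_cases hd1 : d.val = 1
    · exact Or.inl (att_iso_fan_01 n (by omega) c d hc0 hd1)
    · by_cases hdl : d.val = n - 1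
      · left
        rw [att_zero_last n (by omega) c d hc0 hdl]
        exact ⟨RelIso.refl _⟩
      · -- 2 ≤ d ≤ n - 2 : contradiction pair (c, d)
        right
        refine ⟨c, d, hne, ?_, ?_⟩
        · rw [fan_gdeg_zero (by omega) c hc0, if_pos (Or.inl rfl)]
          try omega
        · rw [fan_gdeg_mid d (by omega) (by omega), if_pos (Or.inr rfl)]
          try omega
  · -- d = c + 1 on the path
    by_cases hc0 : c.val = 0
    · exact Or.inl (att_iso_fan_01 n (by omega) c d hc0 (by omega))
    · by_cases hc1 : c.val = 1
      · -- c = 1, d = 2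
        by_cases h3 : n = 3
        · subst h3
          obtain rfl : c = ⟨1, by decide⟩ := by apply Fin.ext; show c.val = 1; omega
          obtain rfl : d = ⟨2, by decide⟩ := by apply Fin.ext; show d.val = 2; omega
          left
          refine ⟨(attCongr sw3).trans ?_⟩
          rw [show (sw3 ⟨1, by decide⟩ : Fin 3) = ⟨0, by omega⟩ from by decide,
            show (sw3 ⟨2, by decide⟩ : Fin 3) = ⟨2, by decide⟩ from by decide,
            att_zero_last 3 (by omega) _ _ rfl rfl]
        · by_cases h4 : n = 4
          · subst h4
            obtain rfl : c = ⟨1, by decide⟩ := by apply Fin.ext; show c.val = 1; omega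
            obtain rfl : d = ⟨2, by decide⟩ := by apply Fin.ext; show d.val = 2; omega
            left
            refine ⟨(attCongr sw4).trans ?_⟩
            rw [show (sw4 ⟨1, by decide⟩ : Fin 4) = ⟨3, by decide⟩ from by decide,
              show (sw4 ⟨2, by decide⟩ : Fin 4) = ⟨0, by omega⟩ from by decide,
              att_comm, att_zero_last 4 (by omega) _ _ rfl rfl]
          · -- n ≥ 5
            right
            refine ⟨⟨0, by omega⟩, d, by simp [Fin.ext_iff]; omega, ?_, ?_⟩
            · rw [fan_gdeg_zero (by omega) _ rfl,
                if_neg (by simp [Fin.ext_iff]; omega)]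
              try omega
            · rw [fan_gdeg_mid d (by omega) (by omega), if_pos (Or.inr rfl)]
              try omega
      · -- c ≥ 2
        by_cases hdl : d.val = n - 1
        · by_cases h4 : n = 4
          · subst h4
            obtain rfl : c = ⟨2, by decide⟩ := by apply Fin.ext; show c.val = 2; omega
            obtain rfl : d = ⟨3, by decide⟩ := by apply Fin.ext; show d.val = 3; omega
            left
            refine ⟨(attCongr sw4).trans ?_⟩
            rw [show (sw4 ⟨2, by decide⟩ : Fin 4) = ⟨0, by omega⟩ from by decide,
              show (sw4 ⟨3, by decide⟩ : Fin 4) = ⟨1, by decide⟩ from by decide]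
            exact Classical.choice (att_iso_fan_01 4 (by omega) _ _ rfl rfl)
          · -- n ≥ 5 (n = 3 impossible)
            have h5 : 5 ≤ n := by omega
            right
            refine ⟨⟨0, by omega⟩, c, by simp [Fin.ext_iff]; omega, ?_, ?_⟩
            · rw [fan_gdeg_zero (by omega) _ rfl,
                if_neg (by simp [Fin.ext_iff]; omega)]
              try omega
            · rw [fan_gdeg_mid c (by omega) (by omega), if_pos (Or.inl rfl)]
              try omega
        · -- both internal
          right
          refine ⟨c, d, hne, ?_, ?_⟩
          · rw [fan_gdeg_mid c (by omega) (by omega), if_pos (Or.inl rfl)]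
            try omega
          · rw [fan_gdeg_mid d (by omega) (by omega), if_pos (Or.inr rfl)]
            try omega

end P5
section P6
open SimpleGraph Fin

def res {n : ℕ} (G : SimpleGraph (Fin (n+1))) : SimpleGraph (Fin n) :=
  G.comap Fin.castSucc

lemma res_adj {n : ℕ} {G : SimpleGraph (Fin (n+1))} {x y : Fin n} :
    (res G).Adj x y ↔ G.Adj x.castSucc y.castSucc := Iff.rfl

lemma gord_res {n : ℕ} {G : SimpleGraph (Fin (n+1))} (h : GOrd G) : GOrd (res G) := by
  constructor
  · intro i j hi hj hij
    exact h.1 i.castSucc j.castSucc (by simpa) (by simpa)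
      (by simp only [Ne, Fin.ext_iff, coe_castSucc]; exact fun hh => hij (Fin.ext hh))
  · intro k hk
    obtain ⟨i, j, hi, hj, hij, hadj, hm⟩ := h.2 k.castSucc (by simpa)
    simp only [coe_castSucc] at hi hj
    have hkv := k.isLt
    refine ⟨⟨i.val, by omega⟩, ⟨j.val, by omega⟩, by simpa using hi, by simpa using hj, ?_, ?_, ?_⟩
    · simp only [Ne, Fin.ext_iff]
      exact fun hh => hij (Fin.ext hh)
    · show G.Adj _ _
      have h1 : (⟨i.val, by omega⟩ : Fin n).castSucc = i := Fin.ext (by simp)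
      have h2 : (⟨j.val, by omega⟩ : Fin n).castSucc = j := Fin.ext (by simp)
      rw [h1, h2]; exact hadj
    · intro m hm'
      have h1 : (⟨i.val, by omega⟩ : Fin n).castSucc = i := Fin.ext (by simp)
      have h2 : (⟨j.val, by omega⟩ : Fin n).castSucc = j := Fin.ext (by simp)
      have := hm m.castSucc (by simpa using hm')
      rw [res_adj, this]
      constructor
      · rintro (h | h)
        · left; apply castSucc_injective; rw [h1]; exact h
        · right; apply castSucc_injective; rw [h2]; exact h
      · rintro (rfl | rfl)
        · exact Or.inl h1.symm
        · exact Or.inr h2.symm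

lemma last_nbhd {n : ℕ} (hn : 3 ≤ n) {G : SimpleGraph (Fin (n+1))} (h : GOrd G) :
    ∃ a b : Fin n, a ≠ b ∧ (res G).Adj a b ∧
      ∀ m : Fin (n+1), G.Adj (Fin.last n) m ↔ (m = a.castSucc ∨ m = b.castSucc) := by
  obtain ⟨i, j, hi, hj, hij, hadj, hm⟩ := h.2 (Fin.last n) (by simp; omega)
  simp only [val_last] at hi hj
  refine ⟨⟨i.val, hi⟩, ⟨j.val, hj⟩, ?_, ?_, ?_⟩
  · simp only [Ne, Fin.ext_iff]
    exact fun hh => hij (Fin.ext hh)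
  · show G.Adj _ _
    have h1 : (⟨i.val, hi⟩ : Fin n).castSucc = i := Fin.ext (by simp)
    have h2 : (⟨j.val, hj⟩ : Fin n).castSucc = j := Fin.ext (by simp)
    rw [h1, h2]; exact hadj
  · intro m
    have h1 : (⟨i.val, hi⟩ : Fin n).castSucc = i := Fin.ext (by simp)
    have h2 : (⟨j.val, hj⟩ : Fin n).castSucc = j := Fin.ext (by simp)
    rw [h1, h2]
    by_cases hml : m = Fin.last n
    · subst hml
      constructor
      · intro hadj'; exact absurd hadj' (G.irrefl)
      · rintro (h | h) <;> (exfalso; have := congrArg Fin.val h; simp only [val_last] at this; omega)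
    · have : m.val < n := by
        have := m.isLt
        have : m.val ≠ n := fun hh => hml (Fin.ext (by simpa using hh))
        omega
      exact hm m (by simpa)

lemma gdeg_res_le {n : ℕ} (G : SimpleGraph (Fin (n+1))) (x : Fin n) :
    gdeg (res G) x ≤ gdeg G x.castSucc := by
  have himg : Fin.castSucc '' (res G).neighborSet x ⊆ G.neighborSet x.castSucc := by
    rintro y ⟨y', hy', rfl⟩
    exact hy'
  calc gdeg (res G) x = (Fin.castSucc '' (res G).neighborSet x).ncard :=
        (Set.ncard_image_of_injective _ (castSucc_injective n)).symm
    _ ≤ _ := Set.ncard_le_ncard himg (Set.toFinite _)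

lemma gdeg_res_lt {n : ℕ} (G : SimpleGraph (Fin (n+1))) (x : Fin n)
    (hadj : G.Adj x.castSucc (Fin.last n)) :
    gdeg (res G) x + 1 ≤ gdeg G x.castSucc := by
  unfold gdeg
  have himg : insert (Fin.last n) (Fin.castSucc '' (res G).neighborSet x)
      ⊆ G.neighborSet x.castSucc := by
    rintro y (rfl | ⟨y', hy', rfl⟩)
    · exact hadj
    · exact hy'
  have hnm : Fin.last n ∉ Fin.castSucc '' (res G).neighborSet x := by
    rintro ⟨y', -, hy⟩
    exact castSucc_ne_last' y' hy
  calc ((res G).neighborSet x).ncard + 1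
      = (insert (Fin.last n) (Fin.castSucc '' (res G).neighborSet x)).ncard := by
        rw [Set.ncard_insert_of_notMem hnm (Set.toFinite _),
          Set.ncard_image_of_injective _ (castSucc_injective n)]
    _ ≤ _ := Set.ncard_le_ncard himg (Set.toFinite _)

def isoAtt {n : ℕ} (G : SimpleGraph (Fin (n+1))) (f : res G ≃g fanGraph n) (a b : Fin n)
    (hlast : ∀ m : Fin (n+1), G.Adj (Fin.last n) m ↔ (m = a.castSucc ∨ m = b.castSucc)) :
    G ≃g att n (f a) (f b) where
  toEquiv := extE f.toEquiv
  map_rel_iff' := by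
    intro x y
    induction x using Fin.lastCases with
    | last => induction y using Fin.lastCases with
      | last => exact iff_of_false ((att _ _ _).irrefl) (G.irrefl)
      | cast y =>
        rw [extE_last, extE_cast, att_adj_last, hlast y.castSucc]
        constructor
        · rintro (h | h)
          · exact Or.inl (congrArg Fin.castSucc (f.toEquiv.injective h))
          · exact Or.inr (congrArg Fin.castSucc (f.toEquiv.injective h))
        · rintro (h | h)
          · left; rw [castSucc_injective _ h]; rfl
          · right; rw [castSucc_injective _ h]; rfl
    | cast x => induction y using Fin.lastCases with
      | last =>
        rw [extE_last, extE_cast, (att _ _ _).adj_comm, att_adj_last, G.adj_comm,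
          hlast x.castSucc]
        constructor
        · rintro (h | h)
          · exact Or.inl (congrArg Fin.castSucc (f.toEquiv.injective h))
          · exact Or.inr (congrArg Fin.castSucc (f.toEquiv.injective h))
        · rintro (h | h)
          · left; rw [castSucc_injective _ h]; rfl
          · right; rw [castSucc_injective _ h]; rfl
      | cast y =>
        rw [extE_cast, extE_cast, att_adj_cast]
        exact f.map_rel_iff

lemma main_lemma : ∀ n, 3 ≤ n → ∀ G : SimpleGraph (Fin n), GOrd G →
    (∀ u v : Fin n, 4 ≤ gdeg G u → 4 ≤ gdeg G v → u = v) →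
    Nonempty (G ≃g fanGraph n) := by
  intro n hn
  induction n, hn using Nat.le_induction with
  | base =>
    intro G hord _
    refine ⟨⟨Equiv.refl _, ?_⟩⟩
    intro x y
    simp only [Equiv.coe_refl, id]
    constructor
    · intro h
      exact hord.1 x y x.isLt y.isLt h.ne
    · intro h
      rw [fan_adj]
      refine ⟨h.ne, ?_⟩
      have hx := x.isLt
      have hy := y.isLt
      have : x.val ≠ y.val := fun hh => h.ne (Fin.ext hh)
      omega
  | succ n hn ih =>
    intro G hord hbig
    obtain ⟨a, b, hab, hadjab, hlast⟩ := last_nbhd hn hord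
    have hres : GOrd (res G) := gord_res hord
    have hbigres : ∀ u v : Fin n, 4 ≤ gdeg (res G) u → 4 ≤ gdeg (res G) v → u = v := by
      intro u v hu hv
      have := hbig u.castSucc v.castSucc (le_trans hu (gdeg_res_le G u))
        (le_trans hv (gdeg_res_le G v))
      exact castSucc_injective _ this
    obtain ⟨f⟩ := ih (res G) hres hbigres
    have key : ∀ a b : Fin n, a ≠ b →
        (∀ m : Fin (n+1), G.Adj (Fin.last n) m ↔ (m = a.castSucc ∨ m = b.castSucc)) →
        ((f a : Fin n).val = 0 ∨ (f a : Fin n).val + 1 = (f b : Fin n).val) →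
        Nonempty (G ≃g fanGraph (n+1)) := by
      intro a b hab hlast hcd
      have hne' : f a ≠ f b := fun h => hab (f.toEquiv.injective h)
      rcases att_classify n hn (f a) (f b) hne' hcd with hiso | ⟨u, v, huv, hu, hv⟩
      · obtain ⟨iso2⟩ := hiso
        exact ⟨(isoAtt G f a b hlast).trans iso2⟩
      · exfalso
        have hdeg : ∀ w : Fin n,
            4 ≤ gdeg (fanGraph n) w + (if w = f a ∨ w = f b then 1 else 0) →
            4 ≤ gdeg G ((f.symm w).castSucc) := by
          intro w hw
          have hgw : gdeg (fanGraph n) w = gdeg (res G) (f.symm w) := by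
            have := gdeg_iso f (f.symm w)
            rwa [f.apply_symm_apply] at this
          by_cases hcase : w = f a ∨ w = f b
          · rw [if_pos hcase] at hw
            have hadjl : G.Adj ((f.symm w).castSucc) (Fin.last n) := by
              rcases hcase with rfl | rfl
              · rw [f.symm_apply_apply]
                exact ((hlast a.castSucc).mpr (Or.inl rfl)).symm
              · rw [f.symm_apply_apply]
                exact ((hlast b.castSucc).mpr (Or.inr rfl)).symm
            have := gdeg_res_lt G (f.symm w) hadjl
            omega
          · rw [if_neg hcase] at hw
            have := gdeg_res_le G (f.symm w)
            omega
        have := hbig _ _ (hdeg u hu) (hdeg v hv)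
        exact huv (f.toEquiv.symm.injective (castSucc_injective _ this))
    have hfadj : (fanGraph n).Adj (f a) (f b) := f.map_rel_iff.mpr hadjab
    rw [fan_adj] at hfadj
    obtain ⟨-, hc | hc | hc | hc⟩ := hfadj
    · exact key a b hab hlast (Or.inl hc)
    · exact key a b hab hlast (Or.inr hc)
    · exact key b a hab.symm (fun m => (hlast m).trans or_comm) (Or.inl hc)
    · exact key b a hab.symm (fun m => (hlast m).trans or_comm) (Or.inr hc)

end P6
section P7
open SimpleGraph Fin

lemma fan_deg_set_hub {n : ℕ} (hn : 5 ≤ n) :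
    {v : Fin n | gdeg (fanGraph n) v = n - 1} = {⟨0, by omega⟩} := by
  ext v
  simp only [Set.mem_setOf_eq, Set.mem_singleton_iff, Fin.ext_iff]
  rw [fan_gdeg (by omega)]
  split_ifs with h1 h2 <;> constructor <;> intro <;> omega

lemma fan_deg_set_two {n : ℕ} (hn : 5 ≤ n) :
    {v : Fin n | gdeg (fanGraph n) v = 2} = {⟨1, by omega⟩, ⟨n - 1, by omega⟩} := by
  ext v
  simp only [Set.mem_setOf_eq, Set.mem_insert_iff, Set.mem_singleton_iff, Fin.ext_iff]
  rw [fan_gdeg (by omega)]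
  split_ifs with h1 h2 <;> constructor <;> intro <;> omega

lemma fan_deg_set_three_compl {n : ℕ} (hn : 5 ≤ n) :
    {v : Fin n | gdeg (fanGraph n) v = 3}ᶜ =
      {⟨0, by omega⟩, ⟨1, by omega⟩, ⟨n - 1, by omega⟩} := by
  ext v
  simp only [Set.mem_compl_iff, Set.mem_setOf_eq, Set.mem_insert_iff,
    Set.mem_singleton_iff, Fin.ext_iff]
  rw [fan_gdeg (by omega)]
  split_ifs with h1 h2 <;> constructor <;> intro <;> omega


lemma stmt3_aux (n : ℕ) (hn : 5 ≤ n) :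
    (∃ Δ, IsStrongCentral (fanGraph n) 1 Δ) ∧
    (∀ (V : Type) [Fintype V] (G : SimpleGraph V), Fintype.card V = n →
      (∃ Δ, IsStrongCentral G 1 Δ) → Nonempty (G ≃g fanGraph n)) ∧
    ({v | gdeg (fanGraph n) v = n - 1}).ncard = 1 ∧
    ({v | gdeg (fanGraph n) v = 3}).ncard = n - 3 ∧
    ({v | gdeg (fanGraph n) v = 2}).ncard = 2 := by
  have hcard1 : ({v : Fin n | gdeg (fanGraph n) v = n - 1}).ncard = 1 := by
    rw [fan_deg_set_hub hn]
    exact Set.ncard_singleton _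
  have hcard2 : ({v : Fin n | gdeg (fanGraph n) v = 2}).ncard = 2 := by
    rw [fan_deg_set_two hn]
    exact Set.ncard_pair (by simp only [Ne, Fin.ext_iff]; omega)
  have hcard3 : ({v : Fin n | gdeg (fanGraph n) v = 3}).ncard = n - 3 := by
    have hc := Set.ncard_add_ncard_compl {v : Fin n | gdeg (fanGraph n) v = 3}
    rw [fan_deg_set_three_compl hn] at hc
    have h3 : ({(⟨0, by omega⟩ : Fin n), ⟨1, by omega⟩, ⟨n - 1, by omega⟩} : Set (Fin n)).ncard
        = 3 := by
      rw [Set.ncard_insert_of_notMem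
        (by simp only [Set.mem_insert_iff, Set.mem_singleton_iff, Fin.ext_iff]; omega),
        Set.ncard_pair (by simp only [Ne, Fin.ext_iff]; omega)]
    rw [h3, Nat.card_eq_fintype_card, Fintype.card_fin] at hc
    omega
  refine ⟨⟨n - 1, ?_, ?_, hcard1, ?_, ?_⟩, ?_, hcard1, hcard3, hcard2⟩
  · exact isTwoTree_of_ord (by omega) (ord_fan (by omega))
  · intro v
    rw [fan_gdeg (by omega)]
    have := v.isLt
    split_ifs <;> omega
  · intro u v hu hv huv
    exfalso
    have hu' : u ∈ {v : Fin n | gdeg (fanGraph n) v = n - 1} := hu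
    have hv' : v ∈ {v : Fin n | gdeg (fanGraph n) v = n - 1} := hv
    rw [fan_deg_set_hub hn] at hu' hv'
    exact huv (hu'.trans hv'.symm)
  · intro v hv
    rw [fan_gdeg (by omega)] at hv ⊢
    split_ifs at hv ⊢ with h1 h2
    · exact absurd rfl hv
    · exact Or.inl rfl
    · exact Or.inr rfl
  · intro V _ G hcard hSC
    subst hcard
    obtain ⟨Δ, htt, hmax, hone, hcore, htail⟩ := hSC
    obtain ⟨e, hord⟩ := ord_of_isTwoTree htt
    let G' : SimpleGraph (Fin (Fintype.card V)) := G.comap ⇑e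
    have e' : G' ≃g G := ⟨e, Iff.rfl⟩
    obtain ⟨w, hw⟩ := Set.ncard_eq_one.mp hone
    have hbigV : ∀ x : V, 4 ≤ gdeg G x → x = w := by
      intro x hx
      have hxΔ : gdeg G x = Δ := by
        by_contra hne
        rcases htail x hne with h | h <;> omega
      have : x ∈ {v : V | gdeg G v = Δ} := hxΔ
      rw [hw] at this
      exact this
    have hbig : ∀ u v : Fin (Fintype.card V),
        4 ≤ gdeg G' u → 4 ≤ gdeg G' v → u = v := by
      intro u v hu hv
      have hgu : gdeg G (e' u) = gdeg G' u := gdeg_iso e' u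
      have hgv : gdeg G (e' v) = gdeg G' v := gdeg_iso e' v
      have h1 := hbigV (e' u) (by omega)
      have h2 := hbigV (e' v) (by omega)
      exact e'.toEquiv.injective (h1.trans h2.symm)
    obtain ⟨g⟩ := main_lemma (Fintype.card V) (by omega) G' hord hbig
    exact ⟨e'.symm.trans g⟩

end P7

theorem stmt3 (n : ℕ) (hn : 5 ≤ n) :
    (∃ Δ, IsStrongCentral (fanGraph n) 1 Δ) ∧
    (∀ (V : Type) [Fintype V] (G : SimpleGraph V), Fintype.card V = n →
      (∃ Δ, IsStrongCentral G 1 Δ) → Nonempty (G ≃g fanGraph n)) ∧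
    ({v | gdeg (fanGraph n) v = n - 1}).ncard = 1 ∧
    ({v | gdeg (fanGraph n) v = 3}).ncard = n - 3 ∧
    ({v | gdeg (fanGraph n) v = 2}).ncard = 2 := by
  exact stmt3_aux n hn
end P4
end Aux
end

section
/- Let G be a strong 2-central (bicentral) 2-tree with tail set {2,3} on n ≥ 4 vertices with maximum degree Δ. Then ⌈(n+2)/2⌉ ≤ Δ ≤ n − 1, and the tail parameters are uniquely determined by x = 2(n − 1 − Δ) and y = 2Δ − n. -/
open SimpleGraph

lemma ncard_eq_filter {V : Type} [Fintype V] (p : V → Prop) [DecidablePred p] :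
    {v | p v}.ncard = (Finset.univ.filter p).card := by
  rw [Set.ncard_eq_toFinset_card']
  congr 1
  ext v
  simp

section Aux
open Finset
variable {V : Type} [Fintype V] (G : SimpleGraph V) (e : Fin (Fintype.card V) ≃ V)
open scoped Classical in
noncomputable def dcAux (i : Fin (Fintype.card V)) (m : ℕ) : ℕ :=
  ∑ j ∈ Finset.range m,
    if h : j < Fintype.card V then (if G.Adj (e i) (e ⟨j, h⟩) then 1 else 0) else 0

/-- In the base triangle, each of the first three vertices has 2 neighbors among the
first three vertices. -/
lemma dc_tri (hN3 : 3 ≤ Fintype.card V)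
    (htri : ∀ i j : Fin (Fintype.card V), i.val < 3 → j.val < 3 → i ≠ j → G.Adj (e i) (e j))
    (i : Fin (Fintype.card V)) (hi : i.val < 3) : dcAux G e i 3 = 2 := by
  classical
  have hf : ∀ (j : ℕ), j < 3 →
      (if h : j < Fintype.card V then (if G.Adj (e i) (e ⟨j, h⟩) then 1 else 0) else 0)
        = if j = i.val then 0 else 1 := by
    intro j hj
    have hjN : j < Fintype.card V := lt_of_lt_of_le hj hN3
    rw [dif_pos hjN]
    by_cases hji : j = i.val
    · have hij : (⟨j, hjN⟩ : Fin (Fintype.card V)) = i := Fin.ext hji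
      simp [hij, hji]
    · have : G.Adj (e i) (e ⟨j, hjN⟩) :=
        htri i ⟨j, hjN⟩ hi hj (fun hh => hji (by rw [hh]))
      simp [this, hji]
  rw [dcAux, Finset.sum_range_succ, Finset.sum_range_succ, Finset.sum_range_succ,
    Finset.sum_range_zero, hf 0 (by omega), hf 1 (by omega), hf 2 (by omega)]
  split_ifs <;> omega

/-- A newly attached vertex has exactly 2 neighbors among earlier ones. -/
lemma dc_pair (k i0 j0 : Fin (Fintype.card V)) (hi0 : i0.val < k.val) (hj0 : j0.val < k.val)
    (hne : i0 ≠ j0)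
    (hiff : ∀ m' : Fin (Fintype.card V), m'.val < k.val →
      (G.Adj (e k) (e m') ↔ m' = i0 ∨ m' = j0)) :
    dcAux G e k k.val = 2 := by
  classical
  have hvne : i0.val ≠ j0.val := fun hh => hne (Fin.ext hh)
  have hf : ∀ j ∈ Finset.range k.val,
      (if h : j < Fintype.card V then (if G.Adj (e k) (e ⟨j, h⟩) then 1 else 0) else 0)
        = (if j = i0.val then 1 else 0) + (if j = j0.val then 1 else 0) := by
    intro j hj
    rw [Finset.mem_range] at hj
    have hjN : j < Fintype.card V := lt_trans hj k.isLt
    rw [dif_pos hjN]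
    have hiffj := hiff ⟨j, hjN⟩ hj
    have hval : ((⟨j, hjN⟩ : Fin (Fintype.card V)) = i0 ∨ (⟨j, hjN⟩ : Fin (Fintype.card V)) = j0)
        ↔ (j = i0.val ∨ j = j0.val) := by
      constructor
      · rintro (rfl | rfl) <;> simp
      · rintro (hh | hh)
        · exact Or.inl (Fin.ext hh)
        · exact Or.inr (Fin.ext hh)
    rw [hval] at hiffj
    by_cases h1 : j = i0.val <;> by_cases h2 : j = j0.val
    · omega
    · rw [if_pos (hiffj.mpr (Or.inl h1)), if_pos h1, if_neg h2]
    · rw [if_pos (hiffj.mpr (Or.inr h2)), if_neg h1, if_pos h2]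
    · have : ¬ G.Adj (e k) (e ⟨j, hjN⟩) := fun ha => by
        rcases hiffj.mp ha with hh | hh <;> omega
      simp [h1, h2, this]
  rw [dcAux, Finset.sum_congr rfl hf, Finset.sum_add_distrib,
    Finset.sum_ite_eq' (Finset.range k.val) i0.val (fun _ => 1),
    Finset.sum_ite_eq' (Finset.range k.val) j0.val (fun _ => 1)]
  simp [Finset.mem_range, hi0, hj0]

open scoped Classical in
/-- When vertex `w` is attached, exactly 2 earlier vertices gain a neighbor. -/
lemma dc_incoming (w i0 j0 : Fin (Fintype.card V)) (hi0 : i0.val < w.val)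
    (hj0 : j0.val < w.val) (hne : i0 ≠ j0)
    (hiff : ∀ m' : Fin (Fintype.card V), m'.val < w.val →
      (G.Adj (e w) (e m') ↔ m' = i0 ∨ m' = j0)) :
    ∑ i ∈ univ.filter (fun i : Fin (Fintype.card V) => i.val < w.val),
      (if G.Adj (e i) (e w) then 1 else 0) = 2 := by
  classical
  have hf : ∀ i ∈ univ.filter (fun i : Fin (Fintype.card V) => i.val < w.val),
      (if G.Adj (e i) (e w) then 1 else 0)
        = (if i = i0 then 1 else 0) + (if i = j0 then 1 else 0) := by
    intro i hi
    rw [Finset.mem_filter] at hi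
    have hiffi := hiff i hi.2
    rw [G.adj_comm] at hiffi
    by_cases h1 : i = i0 <;> by_cases h2 : i = j0
    · exact absurd (h1 ▸ h2.symm ▸ rfl) hne
    · rw [if_pos (hiffi.mpr (Or.inl h1)), if_pos h1, if_neg h2]
    · rw [if_pos (hiffi.mpr (Or.inr h2)), if_neg h1, if_pos h2]
    · have : ¬ G.Adj (e i) (e w) := fun ha => by
        rcases hiffi.mp ha with hh | hh
        · exact h1 hh
        · exact h2 hh
      simp [h1, h2, this]
  rw [Finset.sum_congr rfl hf, Finset.sum_add_distrib,
    Finset.sum_ite_eq' _ i0 (fun _ => 1), Finset.sum_ite_eq' _ j0 (fun _ => 1)]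
  have m1 : i0 ∈ univ.filter (fun i : Fin (Fintype.card V) => i.val < w.val) :=
    Finset.mem_filter.mpr ⟨Finset.mem_univ _, hi0⟩
  have m2 : j0 ∈ univ.filter (fun i : Fin (Fintype.card V) => i.val < w.val) :=
    Finset.mem_filter.mpr ⟨Finset.mem_univ _, hj0⟩
  rw [if_pos m1, if_pos m2]

open scoped Classical in
lemma dc_succ (i : Fin (Fintype.card V)) (m : ℕ) (hm : m < Fintype.card V) :
    dcAux G e i (m + 1) = dcAux G e i m + (if G.Adj (e i) (e ⟨m, hm⟩) then 1 else 0) := by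
  rw [dcAux, Finset.sum_range_succ, dif_pos hm, dcAux]

lemma dc_eq_gdeg (i : Fin (Fintype.card V)) :
    dcAux G e i (Fintype.card V) = gdeg G (e i) := by
  classical
  rw [gdeg, Set.ncard_eq_toFinset_card']
  have h1 : (G.neighborSet (e i)).toFinset = univ.filter (fun u => G.Adj (e i) u) := by
    ext u; simp
  rw [h1, Finset.card_filter,
    ← Equiv.sum_comp e (fun u => if G.Adj (e i) u then 1 else 0)]
  rw [dcAux, ← Fin.sum_univ_eq_sum_range
    (fun j => if h : j < Fintype.card V then (if G.Adj (e i) (e ⟨j, h⟩) then 1 else 0) else 0)]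
  apply Finset.sum_congr rfl
  intro j _
  rw [dif_pos j.isLt]

lemma gdeg_lt (v : V) : gdeg G v + 1 ≤ Fintype.card V := by
  classical
  have h2 := Finset.card_le_card (Finset.subset_univ (insert v (G.neighborSet v).toFinset))
  rw [Finset.card_insert_of_notMem (by simp), Finset.card_univ] at h2
  rw [gdeg, Set.ncard_eq_toFinset_card']
  omega

lemma sum_dc (hN3 : 3 ≤ Fintype.card V)
    (htri : ∀ i j : Fin (Fintype.card V), i.val < 3 → j.val < 3 → i ≠ j → G.Adj (e i) (e j))
    (hstep : ∀ k : Fin (Fintype.card V), 3 ≤ k.val →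
      ∃ i j : Fin (Fintype.card V), i.val < k.val ∧ j.val < k.val ∧ i ≠ j ∧
        G.Adj (e i) (e j) ∧
        ∀ m : Fin (Fintype.card V), m.val < k.val →
          (G.Adj (e k) (e m) ↔ m = i ∨ m = j)) :
    ∀ m, 3 ≤ m → m ≤ Fintype.card V →
      (∑ i ∈ univ.filter (fun i : Fin (Fintype.card V) => i.val < m), dcAux G e i m) + 6
        = 4 * m := by
  classical
  intro m
  induction m with
  | zero => omega
  | succ m ih =>
    intro h3 hle
    by_cases hm3 : m < 3
    · rw [show m + 1 = 3 from by omega]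
      have hset : univ.filter (fun i : Fin (Fintype.card V) => i.val < 3)
          = {(⟨0, by omega⟩ : Fin (Fintype.card V)), ⟨1, by omega⟩, ⟨2, by omega⟩} := by
        ext i
        simp only [Finset.mem_filter, Finset.mem_univ, true_and, Finset.mem_insert,
          Finset.mem_singleton, Fin.ext_iff]
        omega
      rw [hset, Finset.sum_insert (by simp [Fin.ext_iff]),
        Finset.sum_insert (by simp [Fin.ext_iff]), Finset.sum_singleton,
        dc_tri G e hN3 htri _ (by norm_num), dc_tri G e hN3 htri _ (by norm_num),
        dc_tri G e hN3 htri _ (by norm_num)]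
      norm_num
    · have h3m : 3 ≤ m := by omega
      have hmN : m < Fintype.card V := by omega
      obtain ⟨i0, j0, hi0, hj0, hne0, hadj0, hiff0⟩ :=
        hstep ⟨m, hmN⟩ (by simpa using h3m)
      have hsplit : univ.filter (fun i : Fin (Fintype.card V) => i.val < m + 1)
          = insert ⟨m, hmN⟩ (univ.filter (fun i : Fin (Fintype.card V) => i.val < m)) := by
        ext i
        simp only [Finset.mem_filter, Finset.mem_univ, true_and, Finset.mem_insert,
          Fin.ext_iff]
        omega
      have hwni : (⟨m, hmN⟩ : Fin (Fintype.card V))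
          ∉ univ.filter (fun i : Fin (Fintype.card V) => i.val < m) := by
        simp
      rw [hsplit, Finset.sum_insert hwni]
      have hdw : dcAux G e ⟨m, hmN⟩ (m + 1) = 2 := by
        rw [dc_succ G e ⟨m, hmN⟩ m hmN, if_neg (G.irrefl)]
        have h2 : dcAux G e ⟨m, hmN⟩ m = 2 :=
          dc_pair G e ⟨m, hmN⟩ i0 j0 hi0 hj0 hne0 hiff0
        omega
      have hold : ∑ i ∈ univ.filter (fun i : Fin (Fintype.card V) => i.val < m),
            dcAux G e i (m + 1)
          = (∑ i ∈ univ.filter (fun i : Fin (Fintype.card V) => i.val < m),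
              dcAux G e i m) + 2 := by
        have hstep2 : ∀ i ∈ univ.filter (fun i : Fin (Fintype.card V) => i.val < m),
            dcAux G e i (m + 1)
              = dcAux G e i m + (if G.Adj (e i) (e ⟨m, hmN⟩) then 1 else 0) :=
          fun i _ => dc_succ G e i m hmN
        rw [Finset.sum_congr rfl hstep2, Finset.sum_add_distrib,
          dc_incoming G e ⟨m, hmN⟩ i0 j0 hi0 hj0 hne0 hiff0]
      rw [hold, hdw]
      have := ih h3m (le_of_lt hmN)
      omega

lemma two_deg2 (hN4 : 4 ≤ Fintype.card V)
    (htri : ∀ i j : Fin (Fintype.card V), i.val < 3 → j.val < 3 → i ≠ j → G.Adj (e i) (e j))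
    (hstep : ∀ k : Fin (Fintype.card V), 3 ≤ k.val →
      ∃ i j : Fin (Fintype.card V), i.val < k.val ∧ j.val < k.val ∧ i ≠ j ∧
        G.Adj (e i) (e j) ∧
        ∀ m : Fin (Fintype.card V), m.val < k.val →
          (G.Adj (e k) (e m) ↔ m = i ∨ m = j)) :
    ∀ m, 4 ≤ m → m ≤ Fintype.card V →
      ∃ a b : Fin (Fintype.card V), a.val < m ∧ b.val < m ∧ a ≠ b ∧
        ¬ G.Adj (e a) (e b) ∧ dcAux G e a m = 2 ∧ dcAux G e b m = 2 := by
  classical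
  have hN3 : 3 ≤ Fintype.card V := by omega
  intro m
  induction m with
  | zero => omega
  | succ m ih =>
    intro h4 hle
    have hmN : m < Fintype.card V := by omega
    by_cases hm4 : m < 4
    · -- base case m + 1 = 4, m = 3
      have hm : m = 3 := by omega
      subst hm
      obtain ⟨i0, j0, hi0, hj0, hne0, hadj0, hiff0⟩ :=
        hstep ⟨3, hmN⟩ (by simp)
      have hvne : i0.val ≠ j0.val := fun hh => hne0 (Fin.ext hh)
      have hi0' : i0.val < 3 := hi0
      have hj0' : j0.val < 3 := hj0
      obtain ⟨t, ht3, hti, htj⟩ : ∃ t, t < 3 ∧ t ≠ i0.val ∧ t ≠ j0.val :=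
        ⟨3 - i0.val - j0.val, by omega, by omega, by omega⟩
      have htN : t < Fintype.card V := by omega
      have hnadj : ¬ G.Adj (e ⟨3, hmN⟩) (e ⟨t, htN⟩) := by
        intro hadj
        rcases (hiff0 ⟨t, htN⟩ (show t < 3 from ht3)).mp hadj with hh | hh
        · exact hti (by simpa [Fin.ext_iff] using hh)
        · exact htj (by simpa [Fin.ext_iff] using hh)
      refine ⟨⟨3, hmN⟩, ⟨t, htN⟩, (show (3:ℕ) < 3 + 1 by omega),
        (show t < 3 + 1 by omega), ?_, hnadj, ?_, ?_⟩
      · intro hh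
        have := Fin.mk.injEq 3 hmN t htN ▸ hh
        exact absurd (Fin.ext_iff.mp hh) (by omega)
      · rw [dc_succ G e _ 3 hmN, if_neg (G.irrefl)]
        have h2 : dcAux G e ⟨3, hmN⟩ 3 = 2 :=
          dc_pair G e ⟨3, hmN⟩ i0 j0 hi0 hj0 hne0 hiff0
        omega
      · rw [dc_succ G e _ 3 hmN,
          if_neg (fun hadj => hnadj (SimpleGraph.Adj.symm hadj))]
        have h2 : dcAux G e ⟨t, htN⟩ 3 = 2 := dc_tri G e hN3 htri _ (show t < 3 from ht3)
        omega
    · -- inductive step, m ≥ 4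
      obtain ⟨a, b, ham, hbm, hab, hnadj, hda, hdb⟩ := ih (by omega) (le_of_lt hmN)
      obtain ⟨i0, j0, hi0, hj0, hne0, hadj0, hiff0⟩ :=
        hstep ⟨m, hmN⟩ (show 3 ≤ m by omega)
      have hkey : ∃ c : Fin (Fintype.card V), c.val < m ∧ dcAux G e c m = 2 ∧
          c ≠ i0 ∧ c ≠ j0 := by
        by_cases ha : a = i0 ∨ a = j0
        · refine ⟨b, hbm, hdb, ?_, ?_⟩
          · rintro rfl
            rcases ha with rfl | rfl
            · exact hab rfl
            · exact hnadj hadj0.symm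
          · rintro rfl
            rcases ha with rfl | rfl
            · exact hnadj hadj0
            · exact hab rfl
        · push_neg at ha
          exact ⟨a, ham, hda, ha.1, ha.2⟩
      obtain ⟨c, hcm, hdc, hci, hcj⟩ := hkey
      have hncw : ¬ G.Adj (e ⟨m, hmN⟩) (e c) := by
        intro hadj
        rcases (hiff0 c (show c.val < m from hcm)).mp hadj with hh | hh
        · exact hci hh
        · exact hcj hh
      refine ⟨c, ⟨m, hmN⟩, (by omega : c.val < m + 1), (show m < m + 1 by omega), ?_,
        (fun hadj => hncw hadj.symm), ?_, ?_⟩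
      · intro hh
        have : c.val = m := Fin.ext_iff.mp hh
        omega
      · rw [dc_succ G e c m hmN, if_neg (fun hadj => hncw hadj.symm)]
        omega
      · rw [dc_succ G e _ m hmN, if_neg (G.irrefl)]
        have h2 : dcAux G e ⟨m, hmN⟩ m = 2 :=
          dc_pair G e ⟨m, hmN⟩ i0 j0 hi0 hj0 hne0 hiff0
        omega

end Aux

theorem stmt5 {V : Type} [Fintype V] (G : SimpleGraph V) (n Δ : ℕ)
    (hn : 4 ≤ n) (hcard : Fintype.card V = n)
    (h : IsStrongCentral G 2 Δ) :
    ⌈((n : ℚ) + 2) / 2⌉ ≤ (Δ : ℤ) ∧ Δ ≤ n - 1 ∧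
    (tail3 G Δ : ℤ) = 2 * ((n : ℤ) - 1 - (Δ : ℤ)) ∧
    (tail2 G Δ : ℤ) = 2 * (Δ : ℤ) - (n : ℤ) := by
  classical
  obtain ⟨h2t, hle, hcore, hclique, htail⟩ := h
  obtain ⟨hN3, e, htri, hstep⟩ := h2t
  set A := Finset.univ.filter (fun v : V => gdeg G v = Δ) with hA
  set B := Finset.univ.filter (fun v : V => gdeg G v ≠ Δ ∧ gdeg G v = 3) with hB
  set C := Finset.univ.filter (fun v : V => gdeg G v ≠ Δ ∧ gdeg G v = 2) with hC
  have hAcard : A.card = 2 := by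
    have hh : {v : V | gdeg G v = Δ}.toFinset = A := by
      ext v
      rw [hA, Finset.mem_filter]
      simp
    rw [← hcore, Set.ncard_eq_toFinset_card', hh]
  have hdAB : Disjoint A B := by
    rw [Finset.disjoint_left]
    intro v hv hv'
    rw [hA, Finset.mem_filter] at hv
    rw [hB, Finset.mem_filter] at hv'
    exact hv'.2.1 hv.2
  have hdAC : Disjoint A C := by
    rw [Finset.disjoint_left]
    intro v hv hv'
    rw [hA, Finset.mem_filter] at hv
    rw [hC, Finset.mem_filter] at hv'
    exact hv'.2.1 hv.2
  have hdBC : Disjoint B C := by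
    rw [Finset.disjoint_left]
    intro v hv hv'
    rw [hB, Finset.mem_filter] at hv
    rw [hC, Finset.mem_filter] at hv'
    omega
  have hunion : A ∪ B ∪ C = Finset.univ := by
    ext v
    simp only [Finset.mem_union, hA, hB, hC, Finset.mem_filter, Finset.mem_univ, true_and,
      iff_true]
    by_cases hv : gdeg G v = Δ
    · exact Or.inl (Or.inl hv)
    · rcases htail v hv with h2 | h3
      · exact Or.inr ⟨hv, h2⟩
      · exact Or.inl (Or.inr ⟨hv, h3⟩)
  have hcards : 2 + B.card + C.card = n := by
    have h1 : (A ∪ B ∪ C).card = n := by rw [hunion, Finset.card_univ, hcard]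
    rw [Finset.card_union_of_disjoint (by
        rw [Finset.disjoint_union_left]; exact ⟨hdAC, hdBC⟩),
      Finset.card_union_of_disjoint hdAB, hAcard] at h1
    omega
  have hsum : (∑ v : V, gdeg G v) + 6 = 4 * n := by
    have h1 := sum_dc G e hN3 htri hstep (Fintype.card V) hN3 le_rfl
    rw [Finset.filter_true_of_mem (fun i _ => i.isLt),
      Finset.sum_congr rfl (fun i _ => dc_eq_gdeg G e i),
      Equiv.sum_comp e (gdeg G), hcard] at h1
    exact h1
  have hsplit : (∑ v : V, gdeg G v) = 2 * Δ + 3 * B.card + 2 * C.card := by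
    rw [← hunion, Finset.sum_union (by
        rw [Finset.disjoint_union_left]; exact ⟨hdAC, hdBC⟩),
      Finset.sum_union hdAB]
    have hsA : ∑ v ∈ A, gdeg G v = 2 * Δ := by
      have h1 : ∑ v ∈ A, gdeg G v = ∑ _v ∈ A, Δ :=
        Finset.sum_congr rfl (fun v hv => by
          rw [hA, Finset.mem_filter] at hv; exact hv.2)
      rw [h1, Finset.sum_const, hAcard, smul_eq_mul]
    have hsB : ∑ v ∈ B, gdeg G v = 3 * B.card := by
      have h1 : ∑ v ∈ B, gdeg G v = ∑ _v ∈ B, 3 :=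
        Finset.sum_congr rfl (fun v hv => by
          rw [hB, Finset.mem_filter] at hv; exact hv.2.2)
      rw [h1, Finset.sum_const, smul_eq_mul, Nat.mul_comm]
    have hsC : ∑ v ∈ C, gdeg G v = 2 * C.card := by
      have h1 : ∑ v ∈ C, gdeg G v = ∑ _v ∈ C, 2 :=
        Finset.sum_congr rfl (fun v hv => by
          rw [hC, Finset.mem_filter] at hv; exact hv.2.2)
      rw [h1, Finset.sum_const, smul_eq_mul, Nat.mul_comm]
    rw [hsA, hsB, hsC]
  have heq1 : 2 * Δ + 3 * B.card + 2 * C.card + 6 = 4 * n := by rw [← hsplit]; exact hsum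
  -- Δ ≤ n - 1
  have hΔn : Δ + 1 ≤ n := by
    have hApos : A.Nonempty := Finset.card_pos.mp (by omega)
    obtain ⟨v, hv⟩ := hApos
    rw [hA, Finset.mem_filter] at hv
    have := gdeg_lt G v
    rw [hv.2, hcard] at this
    exact this
  -- Δ ≠ 2
  have hΔ2 : Δ ≠ 2 := by
    intro hΔ
    have hBpos : 1 ≤ B.card := by omega
    obtain ⟨v, hv⟩ := Finset.card_pos.mp (by omega : 0 < B.card)
    rw [hB, Finset.mem_filter] at hv
    have := hle v
    omega
  -- two tail vertices of degree 2
  have hC2 : 2 ≤ C.card := by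
    obtain ⟨a, b, _, _, hab, _, hda, hdb⟩ :=
      two_deg2 G e (by omega : 4 ≤ Fintype.card V) htri hstep (Fintype.card V)
        (by omega) le_rfl
    rw [dc_eq_gdeg G e a] at hda
    rw [dc_eq_gdeg G e b] at hdb
    have hma : e a ∈ C := by
      rw [hC, Finset.mem_filter]
      exact ⟨Finset.mem_univ _, by rw [hda]; exact fun hh => hΔ2 hh.symm, hda⟩
    have hmb : e b ∈ C := by
      rw [hC, Finset.mem_filter]
      exact ⟨Finset.mem_univ _, by rw [hdb]; exact fun hh => hΔ2 hh.symm, hdb⟩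
    exact Finset.one_lt_card.mpr ⟨e a, hma, e b, hmb, e.injective.ne hab⟩
  have ht3 : tail3 G Δ = B.card := by
    have hh : {v : V | gdeg G v ≠ Δ ∧ gdeg G v = 3}.toFinset = B := by
      ext v
      rw [hB, Finset.mem_filter]
      simp
    rw [tail3, Set.ncard_eq_toFinset_card', hh]
  have ht2 : tail2 G Δ = C.card := by
    have hh : {v : V | gdeg G v ≠ Δ ∧ gdeg G v = 2}.toFinset = C := by
      ext v
      rw [hC, Finset.mem_filter]
      simp
    rw [tail2, Set.ncard_eq_toFinset_card', hh]
  refine ⟨?_, by omega, ?_, ?_⟩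
  · rw [Int.ceil_le]
    have hkey : (n : ℚ) + 2 ≤ (Δ : ℚ) * 2 := by
      exact_mod_cast (by omega : n + 2 ≤ Δ * 2)
    rw [div_le_iff₀ (by norm_num : (0 : ℚ) < 2)]
    push_cast
    linarith
  · rw [ht3]; omega
  · rw [ht2]; omega
end

section
/- Let G be a strong 2-central (bicentral) 2-tree on n ≥ 6 vertices with tail set {2,3} and exactly two vertices of degree 3. Denote the two core vertices by a, b and the tail set by T. Then both degree-3 vertices belong to S = N(a) ∩ N(b) ∩ T, the set of tail vertices adjacent to both core vertices. -/
open SimpleGraph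

section AuxStmt7

open Finset

open Classical in
lemma aux_gdeg_filter {V : Type} [Fintype V] (G : SimpleGraph V) {N : ℕ} (e : Fin N ≃ V) (v : V) :
    (G.neighborSet v).ncard = (univ.filter fun m : Fin N => G.Adj v (e m)).card := by
  rw [← Nat.card_coe_set_eq,
    Nat.card_congr (Equiv.subtypeEquiv e (p := fun m => G.Adj v (e m))
      (q := fun w => w ∈ G.neighborSet v)
      (fun m => by simp [SimpleGraph.neighborSet])).symm,
    Nat.card_eq_fintype_card, Fintype.card_subtype]

lemma aux_sum_range (N : ℕ) (hN : 3 ≤ N) :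
    ∑ i ∈ range N, (if i < 3 then i else 2) = 2 * N - 3 := by
  induction N, hN using Nat.le_induction with
  | base => decide
  | succ n hn ih =>
    rw [Finset.sum_range_succ, ih, if_neg (by omega)]
    omega

open Classical in
lemma aux_sum_deg {V : Type} [Fintype V] (G : SimpleGraph V)
    (hN : 3 ≤ Fintype.card V) (e : Fin (Fintype.card V) ≃ V)
    (htri : ∀ i j : Fin (Fintype.card V), i.val < 3 → j.val < 3 → i ≠ j → G.Adj (e i) (e j))
    (hrec : ∀ k : Fin (Fintype.card V), 3 ≤ k.val →
      ∃ i j : Fin (Fintype.card V), i.val < k.val ∧ j.val < k.val ∧ i ≠ j ∧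
        G.Adj (e i) (e j) ∧
        ∀ m : Fin (Fintype.card V), m.val < k.val →
          (G.Adj (e k) (e m) ↔ m = i ∨ m = j)) :
    ∑ v, (G.neighborSet v).ncard = 4 * Fintype.card V - 6 := by
  classical
  set below : Fin (Fintype.card V) → Finset (Fin (Fintype.card V)) :=
    fun k => univ.filter fun m => m < k ∧ G.Adj (e m) (e k) with hbelowdef
  set above : Fin (Fintype.card V) → Finset (Fin (Fintype.card V)) :=
    fun k => univ.filter fun m => k < m ∧ G.Adj (e k) (e m) with habovedef
  set S : Finset (Fin (Fintype.card V) × Fin (Fintype.card V)) :=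
    univ.filter fun p => p.1 < p.2 ∧ G.Adj (e p.1) (e p.2) with hSdef
  have hbelow : ∀ k, (below k).card = if k.val < 3 then k.val else 2 := by
    intro k
    by_cases hk : k.val < 3
    · rw [if_pos hk]
      have h1 : below k = Finset.Iio k := by
        ext m
        simp only [hbelowdef, mem_filter, mem_univ, true_and, Finset.mem_Iio]
        exact ⟨fun h => h.1, fun hm => ⟨hm, htri m k (by omega) hk (Fin.ne_of_lt hm)⟩⟩
      rw [h1, Fin.card_Iio]
    · rw [if_neg hk]
      obtain ⟨i, j, hik, hjk, hij, hadj, hiff⟩ := hrec k (by omega)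
      have h1 : below k = {i, j} := by
        ext m
        simp only [hbelowdef, mem_filter, mem_univ, true_and, Finset.mem_insert,
          Finset.mem_singleton]
        constructor
        · rintro ⟨hm, hadjm⟩
          exact (hiff m hm).1 hadjm.symm
        · rintro (rfl | rfl)
          · exact ⟨hik, ((hiff m hik).2 (Or.inl rfl)).symm⟩
          · exact ⟨hjk, ((hiff m hjk).2 (Or.inr rfl)).symm⟩
      rw [h1, Finset.card_insert_of_notMem (by simpa using hij), Finset.card_singleton]
  have hsumbelow : ∑ k, (below k).card = 2 * Fintype.card V - 3 := by
    calc ∑ k, (below k).card = ∑ k : Fin (Fintype.card V), (if k.val < 3 then k.val else 2) :=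
          Finset.sum_congr rfl fun k _ => hbelow k
      _ = ∑ i ∈ range (Fintype.card V), (if i < 3 then i else 2) :=
          Fin.sum_univ_eq_sum_range (fun i => if i < 3 then i else 2) _
      _ = 2 * Fintype.card V - 3 := aux_sum_range _ hN
  have hS2 : S.card = ∑ k, (below k).card := by
    rw [Finset.card_eq_sum_card_fiberwise (f := fun p => p.2) (t := univ)
      (fun _ _ => mem_univ _)]
    refine Finset.sum_congr rfl fun k _ => ?_
    refine Finset.card_nbij' Prod.fst (fun m => (m, k)) ?_ ?_ ?_ ?_
    · rintro ⟨m, l⟩ hp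
      simp only [hSdef, hbelowdef, mem_filter, mem_univ, true_and, Finset.mem_coe] at hp ⊢
      obtain ⟨⟨h1, h2⟩, rfl⟩ := hp
      exact ⟨h1, h2⟩
    · intro m hm
      simp only [hSdef, hbelowdef, mem_filter, mem_univ, true_and, Finset.mem_coe] at hm ⊢
      exact ⟨hm, trivial⟩
    · rintro ⟨m, l⟩ hp
      simp only [hSdef, mem_filter, mem_univ, true_and, Finset.mem_coe] at hp
      simp [hp.2]
    · intro m _; rfl
  have hS1 : S.card = ∑ k, (above k).card := by
    rw [Finset.card_eq_sum_card_fiberwise (f := fun p => p.1) (t := univ)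
      (fun _ _ => mem_univ _)]
    refine Finset.sum_congr rfl fun k _ => ?_
    refine Finset.card_nbij' Prod.snd (fun m => (k, m)) ?_ ?_ ?_ ?_
    · rintro ⟨l, m⟩ hp
      simp only [hSdef, habovedef, mem_filter, mem_univ, true_and, Finset.mem_coe] at hp ⊢
      obtain ⟨⟨h1, h2⟩, rfl⟩ := hp
      exact ⟨h1, h2⟩
    · intro m hm
      simp only [hSdef, habovedef, mem_filter, mem_univ, true_and, Finset.mem_coe] at hm ⊢
      exact ⟨hm, trivial⟩
    · rintro ⟨l, m⟩ hp
      simp only [hSdef, mem_filter, mem_univ, true_and, Finset.mem_coe] at hp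
      simp [hp.2]
    · intro m _; rfl
  have hdeg : ∀ k, (G.neighborSet (e k)).ncard = (below k).card + (above k).card := by
    intro k
    rw [aux_gdeg_filter G e (e k)]
    have hdisj : Disjoint (below k) (above k) := by
      rw [Finset.disjoint_left]
      rintro m hm1 hm2
      simp only [hbelowdef, habovedef, mem_filter, mem_univ, true_and] at hm1 hm2
      exact absurd (lt_trans hm1.1 hm2.1) (lt_irrefl m)
    have hsplit : (univ.filter fun m : Fin (Fintype.card V) => G.Adj (e k) (e m))
        = below k ∪ above k := by
      ext m
      simp only [hbelowdef, habovedef, mem_filter, mem_univ, true_and, Finset.mem_union]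
      constructor
      · intro hadj
        rcases lt_trichotomy m k with h | h | h
        · exact Or.inl ⟨h, hadj.symm⟩
        · exact absurd (h ▸ hadj) (G.irrefl)
        · exact Or.inr ⟨h, hadj⟩
      · rintro (⟨_, h⟩ | ⟨_, h⟩)
        · exact h.symm
        · exact h
    rw [hsplit, Finset.card_union_of_disjoint hdisj]
  have hsumabove : ∑ k, (above k).card = 2 * Fintype.card V - 3 := by
    rw [← hS1, hS2, hsumbelow]
  calc ∑ v, (G.neighborSet v).ncard
      = ∑ k : Fin (Fintype.card V), (G.neighborSet (e k)).ncard := (Equiv.sum_comp e _).symm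
    _ = ∑ k, ((below k).card + (above k).card) := Finset.sum_congr rfl fun k _ => hdeg k
    _ = ∑ k, (below k).card + ∑ k, (above k).card := Finset.sum_add_distrib
    _ = 4 * Fintype.card V - 6 := by rw [hsumbelow, hsumabove]; omega

/-- helper: a set of ncard 2 containing two distinct named elements equals the pair -/
lemma aux_pair_eq {α : Type*} [Finite α] {s : Set α} {x y : α} (hxy : x ≠ y) (hs : s.ncard = 2)
    (hx : x ∈ s) (hy : y ∈ s) : s = {x, y} :=
  (Set.eq_of_subset_of_ncard_le (by simp [Set.insert_subset_iff, hx, hy])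
    (by rw [hs, Set.ncard_pair hxy]) (Set.toFinite _)).symm

/-- In a 2-tree, any two neighbors of a degree-2 vertex are adjacent. -/
lemma aux_deg2 {V : Type} [Fintype V] (G : SimpleGraph V) (h : IsTwoTree G)
    {w x y : V} (hw : gdeg G w = 2)
    (hx : G.Adj w x) (hy : G.Adj w y) (hxy : x ≠ y) : G.Adj x y := by
  obtain ⟨hN, e, htri, hrec⟩ := h
  obtain ⟨p, q, hpq, hadjpq, hp, hq⟩ :
      ∃ p q : V, p ≠ q ∧ G.Adj p q ∧ G.Adj w p ∧ G.Adj w q := by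
    have hew : e (e.symm w) = w := e.apply_symm_apply w
    by_cases h3 : (e.symm w).val < 3
    · refine ⟨e ⟨((e.symm w).val + 1) % 3, by omega⟩, e ⟨((e.symm w).val + 2) % 3, by omega⟩,
        ?_, ?_, ?_, ?_⟩
      · exact fun hEq => by
          have := e.injective hEq
          have h1 : (((e.symm w).val + 1) % 3) = (((e.symm w).val + 2) % 3) :=
            congrArg Fin.val this
          omega
      · exact htri _ _ (by simpa using Nat.mod_lt _ (by norm_num))
          (by simpa using Nat.mod_lt _ (by norm_num))
          (fun hEq => by have h1 := congrArg Fin.val hEq; simp at h1; omega)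
      · refine hew ▸ htri (e.symm w) _ h3 (by simpa using Nat.mod_lt _ (by norm_num)) ?_
        exact fun hEq => by have h1 := congrArg Fin.val hEq; simp at h1; omega
      · refine hew ▸ htri (e.symm w) _ h3 (by simpa using Nat.mod_lt _ (by norm_num)) ?_
        exact fun hEq => by have h1 := congrArg Fin.val hEq; simp at h1; omega
    · obtain ⟨i, j, hik, hjk, hij, hadj, hiff⟩ := hrec (e.symm w) (by omega)
      refine ⟨e i, e j, fun hEq => hij (e.injective hEq), hadj, ?_, ?_⟩
      · exact hew ▸ (hiff i hik).2 (Or.inl rfl)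
      · exact hew ▸ (hiff j hjk).2 (Or.inr rfl)
  have h1 : G.neighborSet w = {x, y} := aux_pair_eq hxy hw hx hy
  have h2 : G.neighborSet w = {p, q} := aux_pair_eq hpq hw hp hq
  have h3 : x ∈ ({p, q} : Set V) := h2 ▸ h1 ▸ (by simp : x ∈ ({x, y} : Set V))
  have h4 : y ∈ ({p, q} : Set V) := h2 ▸ h1 ▸ (by simp : y ∈ ({x, y} : Set V))
  rcases h3 with rfl | rfl <;> rcases h4 with rfl | rfl
  · exact absurd rfl hxy
  · exact hadjpq
  · exact hadjpq.symm
  · exact absurd rfl hxy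

theorem stmt7' {V : Type} [Fintype V] (G : SimpleGraph V) (n Δ : ℕ) (a b : V)
    (hn : 6 ≤ n) (hcard : Fintype.card V = n)
    (htt : IsTwoTree G)
    (hmax : ∀ v, gdeg G v ≤ Δ)
    (hcore2 : ({v | gdeg G v = Δ}).ncard = 2)
    (htail : ∀ v, gdeg G v ≠ Δ → gdeg G v = 2 ∨ gdeg G v = 3)
    (ha : gdeg G a = Δ) (hb : gdeg G b = Δ) (hab : a ≠ b)
    (h3 : ({v | gdeg G v = 3}).ncard = 2) :
    ∀ v, gdeg G v = 3 → v ≠ a ∧ v ≠ b ∧ G.Adj a v ∧ G.Adj b v := by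
  classical
  have hsum : ∑ v, gdeg G v = 4 * n - 6 := by
    obtain ⟨hN, e, htri, hrec⟩ := htt
    simpa [gdeg, hcard] using aux_sum_deg G hN e htri hrec
  have hcore : {v | gdeg G v = Δ} = {a, b} :=
    aux_pair_eq hab hcore2 ha hb
  -- tail vertices have degree 2 or 3
  have htail' : ∀ v, v ≠ a → v ≠ b → gdeg G v = 2 ∨ gdeg G v = 3 := by
    intro v h1 h2
    refine htail v fun hEq => ?_
    have : v ∈ {u | gdeg G u = Δ} := hEq
    rw [hcore] at this
    rcases this with rfl | rfl
    · exact h1 rfl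
    · exact h2 rfl
  -- sum over the complement of {a,b}
  have hsum2 : gdeg G a + gdeg G b + ∑ v ∈ univ \ {a, b}, gdeg G v = 4 * n - 6 := by
    rw [← hsum]
    rw [← Finset.sum_sdiff (Finset.subset_univ {a, b}), Finset.sum_pair hab]
    ring
  have hcard_sdiff : (univ \ ({a, b} : Finset V)).card = n - 2 := by
    rw [Finset.card_sdiff_of_subset (Finset.subset_univ _), Finset.card_pair hab, Finset.card_univ, hcard]
  -- Δ ≥ 4
  have hΔ3 : Δ ≠ 3 := by
    intro hΔ
    have hall2 : ∀ v ∈ univ \ ({a, b} : Finset V), gdeg G v = 2 := by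
      intro v hv
      simp only [Finset.mem_sdiff, Finset.mem_insert, Finset.mem_singleton] at hv
      rcases htail' v (fun h => hv.2 (Or.inl h)) (fun h => hv.2 (Or.inr h)) with h | h
      · exact h
      · exact absurd (h.trans hΔ.symm) (by
          intro hEq
          have : v ∈ {u | gdeg G u = Δ} := hEq
          rw [hcore] at this
          rcases this with rfl | rfl
          · exact hv.2 (Or.inl rfl)
          · exact hv.2 (Or.inr rfl))
    rw [Finset.sum_congr rfl hall2, Finset.sum_const, hcard_sdiff, smul_eq_mul, ha, hb, hΔ] at hsum2
    omega
  have hΔ4 : 4 ≤ Δ := by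
    obtain ⟨c, hc⟩ := Set.nonempty_of_ncard_ne_zero (s := {v | gdeg G v = 3}) (by omega)
    have := hmax c
    rw [Set.mem_setOf_eq.mp hc] at this
    omega
  -- Δ = n - 2
  have hΔn : Δ = n - 2 := by
    have hD3ab : ∀ v ∈ univ \ ({a, b} : Finset V),
        gdeg G v = if gdeg G v = 3 then 3 else 2 := by
      intro v hv
      simp only [Finset.mem_sdiff, Finset.mem_insert, Finset.mem_singleton] at hv
      rcases htail' v (fun h => hv.2 (Or.inl h)) (fun h => hv.2 (Or.inr h)) with h | h
      · rw [h, if_neg (by omega)]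
      · rw [h, if_pos rfl]
    rw [Finset.sum_congr rfl hD3ab, Finset.sum_ite, Finset.sum_const, Finset.sum_const] at hsum2
    have hfcard : ((univ \ ({a, b} : Finset V)).filter fun v => gdeg G v = 3).card = 2 := by
      have hEq : ((univ \ ({a, b} : Finset V)).filter fun v => gdeg G v = 3)
          = univ.filter fun v => gdeg G v = 3 := by
        ext v
        simp only [Finset.mem_filter, Finset.mem_sdiff, Finset.mem_univ, true_and,
          Finset.mem_insert, Finset.mem_singleton]
        refine ⟨fun h => h.2, fun h => ⟨?_, h⟩⟩
        rintro (rfl | rfl)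
        · rw [ha] at h; omega
        · rw [hb] at h; omega
      rw [hEq, ← Set.toFinset_setOf, ← Set.ncard_eq_toFinset_card', h3]
    have hfcard2 : ((univ \ ({a, b} : Finset V)).filter fun v => ¬ gdeg G v = 3).card
        = n - 4 := by
      have := Finset.card_filter_add_card_filter_not
        (s := univ \ ({a, b} : Finset V)) (p := fun v => gdeg G v = 3)
      rw [hcard_sdiff, hfcard] at this
      omega
    rw [hfcard, hfcard2, smul_eq_mul, smul_eq_mul, ha, hb] at hsum2
    omega
  have key : ∀ a' b' v : V, gdeg G a' = Δ → gdeg G b' = Δ → a' ≠ b' → gdeg G v = 3 →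
      G.Adj a' v := by
    intro a' b' v ha' hb' hab' hv
    by_contra hnadj
    have hcore' : {u | gdeg G u = Δ} = {a', b'} := aux_pair_eq hab' hcore2 ha' hb'
    have htail'' : ∀ u, u ≠ a' → u ≠ b' → gdeg G u = 2 ∨ gdeg G u = 3 := by
      intro u h1 h2
      refine htail u fun hEq => ?_
      have : u ∈ {w | gdeg G w = Δ} := hEq
      rw [hcore'] at this
      rcases this with rfl | rfl
      · exact h1 rfl
      · exact h2 rfl
    have hva' : v ≠ a' := fun h => by rw [h, ha'] at hv; omega
    have hNa : G.neighborSet a' = ({a', v} : Set V)ᶜ := by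
      apply Set.eq_of_subset_of_ncard_le ?_ ?_ (Set.toFinite _)
      · intro w hw
        simp only [Set.mem_compl_iff, Set.mem_insert_iff, Set.mem_singleton_iff]
        rintro (rfl | rfl)
        · exact G.irrefl hw
        · exact hnadj hw
      · have h1 : (({a', v} : Set V)ᶜ).ncard = n - 2 := by
          have := Set.ncard_add_ncard_compl ({a', v} : Set V)
          rw [Set.ncard_pair (Ne.symm hva'), Nat.card_eq_fintype_card, hcard] at this
          omega
        have h2 : (G.neighborSet a').ncard = n - 2 := by
          show gdeg G a' = n - 2
          rw [ha', hΔn]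
        rw [h1, h2]
    have hadjall : ∀ w, w ≠ a' → w ≠ v → G.Adj a' w := by
      intro w h1 h2
      have : w ∈ G.neighborSet a' := by
        rw [hNa]
        simp [h1, h2]
      exact this
    by_cases hbv : G.Adj b' v
    · -- T_v = N(v) \ {b'} consists of degree-3 tail vertices
      have hvN : (G.neighborSet v).ncard = 3 := hv
      have hb'mem : b' ∈ G.neighborSet v := hbv.symm
      have hTv2 : (G.neighborSet v \ {b'}).ncard = 2 := by
        rw [Set.ncard_diff_singleton_of_mem hb'mem, hvN]
      have h3t : ∀ t ∈ G.neighborSet v \ {b'}, gdeg G t = 3 := by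
        rintro t ⟨htv, htb⟩
        simp only [Set.mem_singleton_iff] at htb
        have hvt : G.Adj v t := htv
        have hta : t ≠ a' := by
          rintro rfl
          exact hnadj hvt.symm
        have htv' : t ≠ v := (G.ne_of_adj hvt).symm
        have hadjat : G.Adj a' t := hadjall t hta htv'
        rcases htail'' t hta htb with h2 | h33
        · exact absurd (aux_deg2 G ⟨htt.1, htt.2⟩ h2 hadjat.symm hvt.symm (Ne.symm hva'))
            hnadj
        · exact h33
      have hsub : insert v (G.neighborSet v \ {b'}) ⊆ {u | gdeg G u = 3} := by
        rintro u (rfl | hu)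
        · exact hv
        · exact h3t u hu
      have hins : (insert v (G.neighborSet v \ {b'})).ncard = 3 := by
        rw [Set.ncard_insert_of_notMem (fun hmem => G.irrefl (hmem.1 : G.Adj v v)), hTv2]
      have := Set.ncard_le_ncard hsub (Set.toFinite _)
      rw [hins, h3] at this
      omega
    · -- v adjacent to neither a' nor b'
      have hvb' : v ≠ b' := fun h => by rw [h, hb'] at hv; omega
      have hNb : G.neighborSet b' = ({b', v} : Set V)ᶜ := by
        apply Set.eq_of_subset_of_ncard_le ?_ ?_ (Set.toFinite _)
        · intro w hw
          simp only [Set.mem_compl_iff, Set.mem_insert_iff, Set.mem_singleton_iff]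
          rintro (rfl | rfl)
          · exact G.irrefl hw
          · exact hbv hw
        · have h1 : (({b', v} : Set V)ᶜ).ncard = n - 2 := by
            have := Set.ncard_add_ncard_compl ({b', v} : Set V)
            rw [Set.ncard_pair (Ne.symm hvb'), Nat.card_eq_fintype_card, hcard] at this
            omega
          have h2 : (G.neighborSet b').ncard = n - 2 := by
            show gdeg G b' = n - 2
            rw [hb', hΔn]
          rw [h1, h2]
      have hadjallb : ∀ w, w ≠ b' → w ≠ v → G.Adj b' w := by
        intro w h1 h2
        have : w ∈ G.neighborSet b' := by
          rw [hNb]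
          simp [h1, h2]
        exact this
      have hsub : G.neighborSet v ⊆ {u | gdeg G u = 3} \ {v} := by
        intro t htv
        have hvt : G.Adj v t := htv
        have htv' : t ≠ v := (G.ne_of_adj hvt).symm
        have hta : t ≠ a' := by rintro rfl; exact hnadj hvt.symm
        have htb : t ≠ b' := by rintro rfl; exact hbv hvt.symm
        have hadjat : G.Adj a' t := hadjall t hta htv'
        have hadjbt : G.Adj b' t := hadjallb t htb htv'
        have hsub3 : ({a', b', v} : Set V) ⊆ G.neighborSet t := by
          rintro u (rfl | rfl | rfl)
          · exact hadjat.symm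
          · exact hadjbt.symm
          · exact hvt.symm
        have hc3 : ({a', b', v} : Set V).ncard = 3 := by
          rw [Set.ncard_insert_of_notMem (by simp [hab', Ne.symm hva']),
            Set.ncard_pair (Ne.symm hvb')]
        have hge : 3 ≤ gdeg G t := by
          have := Set.ncard_le_ncard hsub3 (Set.toFinite _)
          rw [hc3] at this
          exact this
        have h33 : gdeg G t = 3 := by
          rcases htail'' t hta htb with h2 | h33
          · omega
          · exact h33
        exact ⟨h33, htv'⟩
      have hD1 : ({u | gdeg G u = 3} \ {v} : Set V).ncard = 1 := by
        rw [Set.ncard_diff_singleton_of_mem (s := {u | gdeg G u = 3}) (a := v) hv, h3]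
      have := Set.ncard_le_ncard hsub (Set.toFinite _)
      rw [hD1] at this
      have hvN : (G.neighborSet v).ncard = 3 := hv
      omega
  intro v hv
  have hva : v ≠ a := fun h => by rw [h, ha] at hv; omega
  have hvb : v ≠ b := fun h => by rw [h, hb] at hv; omega
  exact ⟨hva, hvb, key a b v ha hb hab hv, key b a v hb ha hab.symm hv⟩

end AuxStmt7

theorem stmt7 {V : Type} [Fintype V] (G : SimpleGraph V) (n Δ : ℕ) (a b : V)
    (hn : 6 ≤ n) (hcard : Fintype.card V = n)
    (h : IsStrongCentral G 2 Δ)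
    (ha : gdeg G a = Δ) (hb : gdeg G b = Δ) (hab : a ≠ b)
    (h3 : ({v | gdeg G v = 3}).ncard = 2) :
    ∀ v, gdeg G v = 3 → v ≠ a ∧ v ≠ b ∧ G.Adj a v ∧ G.Adj b v := by
  obtain ⟨htt, hmax, hcore2, _hclique, htail⟩ := h
  exact stmt7' G n Δ a b hn hcard htt hmax hcore2 htail ha hb hab h3
end

section
/- Let G be a strong 2-central (bicentral) 2-tree on n ≥ 6 vertices with tail set {2,3} and exactly two degree-3 tail vertices. Let a, b be the core vertices, T = V(G) \ {a, b}, and S = N(a) ∩ N(b) ∩ T. If u, v ∈ S are the two degree-3 tail vertices, then there exist distinct vertices u', v' ∈ T \ S and a labeling of the core vertices as a, b such that N(u') = {a, u} and N(v') = {b, v}; in particular, deg(u') = deg(v') = 2. -/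
open SimpleGraph

section Aux
variable {V : Type} [Fintype V] {G : SimpleGraph V}

private lemma gdeg_eq_card_filter [DecidableRel G.Adj] (v : V) :
    gdeg G v = (Finset.univ.filter fun w => G.Adj v w).card := by
  rw [gdeg, Set.ncard_eq_toFinset_card', ← SimpleGraph.neighborFinset_def,
    SimpleGraph.neighborFinset_eq_filter]

private lemma ncard_triple {α : Type*} {a b c : α} (h1 : a ≠ b) (h2 : a ≠ c) (h3 : b ≠ c) :
    ({a, b, c} : Set α).ncard = 3 := by
  rw [Set.ncard_insert_of_notMem (by simp [h1, h2]) (Set.toFinite _), Set.ncard_pair h3]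

/-- every edge of a 2-tree lies in a triangle -/
private lemma edge_in_triangle (ht : IsTwoTree G) {u x : V} (hux : G.Adj u x) :
    ∃ w, G.Adj u w ∧ G.Adj x w := by
  obtain ⟨hc3, e, h3, hk⟩ := ht
  have key : ∀ u x : V, G.Adj u x → (e.symm u).val < (e.symm x).val →
      ∃ w, G.Adj u w ∧ G.Adj x w := by
    intro u x hux hlt
    set p := e.symm u with hp
    set q := e.symm x with hq
    have hep : e p = u := e.apply_symm_apply u
    have heq : e q = x := e.apply_symm_apply x
    rcases lt_or_ge q.val 3 with hq3 | hq3
    · have hp3 : p.val < 3 := by omega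
      have hrN : 3 - p.val - q.val < Fintype.card V := by omega
      set r : Fin (Fintype.card V) := ⟨3 - p.val - q.val, hrN⟩ with hr
      have hr3 : r.val < 3 := by simp [hr]; omega
      have hrp : p ≠ r := by simp [hr, Fin.ext_iff]; omega
      have hrq : q ≠ r := by simp [hr, Fin.ext_iff]; omega
      refine ⟨e r, ?_, ?_⟩
      · have := h3 p r hp3 hr3 hrp
        rwa [hep] at this
      · have := h3 q r hq3 hr3 hrq
        rwa [heq] at this
    · obtain ⟨i, j, hi, hj, hij, hadj, hiff⟩ := hk q hq3
      have hpij : p = i ∨ p = j :=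
        (hiff p hlt).1 (by rw [hep, heq]; exact hux.symm)
      rcases hpij with hpi | hpj
      · refine ⟨e j, by rw [← hep, hpi]; exact hadj, ?_⟩
        have := (hiff j hj).2 (Or.inr rfl); rwa [heq] at this
      · refine ⟨e i, by rw [← hep, hpj]; exact hadj.symm, ?_⟩
        have := (hiff i hi).2 (Or.inl rfl); rwa [heq] at this
  have hne : e.symm u ≠ e.symm x := fun hh => hux.ne (e.symm.injective hh)
  rcases lt_or_gt_of_ne (Fin.val_ne_of_ne hne) with hlt | hgt
  · exact key u x hux hlt
  · obtain ⟨w, h1, h2⟩ := key x u hux.symm hgt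
    exact ⟨w, h2, h1⟩


private lemma no_K4 (ht : IsTwoTree G) {w x y z : V}
    (hwx : G.Adj w x) (hwy : G.Adj w y) (hwz : G.Adj w z)
    (hxy : G.Adj x y) (hxz : G.Adj x z) (hyz : G.Adj y z) : False := by
  obtain ⟨hc3, e, h3, hk⟩ := ht
  have main : ∀ k m1 m2 m3 : Fin (Fintype.card V), 3 ≤ k.val →
      m1.val < k.val → m2.val < k.val → m3.val < k.val →
      m1 ≠ m2 → m1 ≠ m3 → m2 ≠ m3 →
      G.Adj (e k) (e m1) → G.Adj (e k) (e m2) → G.Adj (e k) (e m3) → False := by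
    intro k m1 m2 m3 hk3 h1 h2 h3' d12 d13 d23 a1 a2 a3
    obtain ⟨i, j, hi, hj, hij, hadj, hiff⟩ := hk k hk3
    have e1 := (hiff m1 h1).1 a1
    have e2 := (hiff m2 h2).1 a2
    have e3 := (hiff m3 h3').1 a3
    rcases e1 with rfl | rfl <;> rcases e2 with rfl | rfl <;> rcases e3 with rfl | rfl <;>
      simp_all
  set kw := e.symm w with hkw
  set kx := e.symm x with hkx
  set ky := e.symm y with hky
  set kz := e.symm z with hkz
  have hew : e kw = w := e.apply_symm_apply w
  have hex : e kx = x := e.apply_symm_apply x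
  have hey : e ky = y := e.apply_symm_apply y
  have hez : e kz = z := e.apply_symm_apply z
  have dwx : kw ≠ kx := fun hh => hwx.ne (e.symm.injective hh)
  have dwy : kw ≠ ky := fun hh => hwy.ne (e.symm.injective hh)
  have dwz : kw ≠ kz := fun hh => hwz.ne (e.symm.injective hh)
  have dxy : kx ≠ ky := fun hh => hxy.ne (e.symm.injective hh)
  have dxz : kx ≠ kz := fun hh => hxz.ne (e.symm.injective hh)
  have dyz : ky ≠ kz := fun hh => hyz.ne (e.symm.injective hh)
  have vwx := Fin.val_ne_of_ne dwx
  have vwy := Fin.val_ne_of_ne dwy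
  have vwz := Fin.val_ne_of_ne dwz
  have vxy := Fin.val_ne_of_ne dxy
  have vxz := Fin.val_ne_of_ne dxz
  have vyz := Fin.val_ne_of_ne dyz
  rcases le_total kw.val kx.val with h1 | h1 <;> rcases le_total kw.val ky.val with h2 | h2 <;>
    rcases le_total kw.val kz.val with h3' | h3' <;> rcases le_total kx.val ky.val with h4 | h4 <;>
    rcases le_total kx.val kz.val with h5 | h5 <;> rcases le_total ky.val kz.val with h6 | h6
  all_goals first
  | exact main kz kw kx ky (by omega) (by omega) (by omega) (by omega) dwx dwy dxy
      (by rw [hez, hew]; exact hwz.symm) (by rw [hez, hex]; exact hxz.symm)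
      (by rw [hez, hey]; exact hyz.symm)
  | exact main ky kw kx kz (by omega) (by omega) (by omega) (by omega) dwx dwz dxz
      (by rw [hey, hew]; exact hwy.symm) (by rw [hey, hex]; exact hxy.symm)
      (by rw [hey, hez]; exact hyz)
  | exact main kx kw ky kz (by omega) (by omega) (by omega) (by omega) dwy dwz dyz
      (by rw [hex, hew]; exact hwx.symm) (by rw [hex, hey]; exact hxy)
      (by rw [hex, hez]; exact hxz)
  | exact main kw kx ky kz (by omega) (by omega) (by omega) (by omega) dxy dxz dyz
      (by rw [hew, hex]; exact hwx) (by rw [hew, hey]; exact hwy)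
      (by rw [hew, hez]; exact hwz)


private lemma sum_gdeg [DecidableRel G.Adj] (ht : IsTwoTree G) :
    ∑ v : V, gdeg G v + 6 = 4 * Fintype.card V := by
  obtain ⟨hc3, e, h3, hk⟩ := ht
  set B : Fin (Fintype.card V) → ℕ := fun q =>
    (Finset.univ.filter fun p : Fin (Fintype.card V) => p.val < q.val ∧ G.Adj (e q) (e p)).card with hB
  set C : Fin (Fintype.card V) → ℕ := fun q =>
    (Finset.univ.filter fun p : Fin (Fintype.card V) => q.val < p.val ∧ G.Adj (e q) (e p)).card with hC
  -- step 1 : reindex the sum of degrees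
  have step1 : ∑ v : V, gdeg G v =
      ∑ q : Fin (Fintype.card V), (Finset.univ.filter fun p : Fin (Fintype.card V) => G.Adj (e q) (e p)).card := by
    rw [← Equiv.sum_comp e (fun v => gdeg G v)]
    refine Finset.sum_congr rfl fun q _ => ?_
    rw [gdeg_eq_card_filter]
    refine Finset.card_bij (fun w _ => e.symm w) ?_ ?_ ?_
    · intro w hw
      simp only [Finset.mem_filter, Finset.mem_univ, true_and] at hw ⊢
      rwa [e.apply_symm_apply]
    · intro w1 h1 w2 h2 hh
      exact e.symm.injective hh
    · intro p hp
      simp only [Finset.mem_filter, Finset.mem_univ, true_and] at hp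
      exact ⟨e p, by simpa using hp, by simp⟩
  -- step 2 : split each inner count
  have step2 : ∀ q : Fin (Fintype.card V),
      (Finset.univ.filter fun p : Fin (Fintype.card V) => G.Adj (e q) (e p)).card = B q + C q := by
    intro q
    rw [hB, hC]
    rw [← Finset.card_union_of_disjoint]
    · congr 1
      ext p
      simp only [Finset.mem_filter, Finset.mem_univ, true_and, Finset.mem_union]
      constructor
      · intro hadj
        have hne : p ≠ q := fun hh => G.irrefl (hh ▸ hadj)
        have : p.val ≠ q.val := Fin.val_ne_of_ne hne
        rcases lt_or_gt_of_ne this with hlt | hgt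
        · exact Or.inl ⟨hlt, hadj⟩
        · exact Or.inr ⟨hgt, hadj⟩
      · rintro (⟨_, hadj⟩ | ⟨_, hadj⟩) <;> exact hadj
    · rw [Finset.disjoint_left]
      intro p hp hq
      simp only [Finset.mem_filter] at hp hq
      omega
  -- step 3 : ∑ C = ∑ B
  have step3 : ∑ q : Fin (Fintype.card V), C q = ∑ q : Fin (Fintype.card V), B q := by
    simp only [hB, hC, Finset.card_filter]
    rw [Finset.sum_comm]
    refine Finset.sum_congr rfl fun p _ => Finset.sum_congr rfl fun q _ => ?_
    congr 1
    rw [eq_iff_iff]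
    constructor
    · rintro ⟨h1, h2⟩; exact ⟨h1, h2.symm⟩
    · rintro ⟨h1, h2⟩; exact ⟨h1, h2.symm⟩
  -- values of B
  have hBsmall : ∀ q : Fin (Fintype.card V), q.val < 3 → B q = q.val := by
    intro q hq3
    simp only [hB]
    have : (Finset.univ.filter fun p : Fin (Fintype.card V) => p.val < q.val ∧ G.Adj (e q) (e p)) =
        Finset.Iio q := by
      ext p
      simp only [Finset.mem_filter, Finset.mem_univ, true_and, Finset.mem_Iio, Fin.lt_def]
      constructor
      · exact fun h => h.1
      · intro hlt
        refine ⟨hlt, h3 q p hq3 (by omega) ?_⟩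
        intro hh; rw [hh] at hlt; omega
    rw [this, Fin.card_Iio]
  have hBbig : ∀ q : Fin (Fintype.card V), 3 ≤ q.val → B q = 2 := by
    intro q hq3
    obtain ⟨i, j, hi, hj, hij, hadj, hiff⟩ := hk q hq3
    simp only [hB]
    have : (Finset.univ.filter fun p : Fin (Fintype.card V) => p.val < q.val ∧ G.Adj (e q) (e p)) =
        {i, j} := by
      ext p
      simp only [Finset.mem_filter, Finset.mem_univ, true_and, Finset.mem_insert,
        Finset.mem_singleton]
      constructor
      · rintro ⟨hlt, hadj'⟩; exact (hiff p hlt).1 hadj'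
      · rintro (rfl | rfl)
        · exact ⟨hi, (hiff p hi).2 (Or.inl rfl)⟩
        · exact ⟨hj, (hiff p hj).2 (Or.inr rfl)⟩
    rw [this, Finset.card_insert_of_notMem (by simpa using hij), Finset.card_singleton]
  -- sum of B
  have hfilter3 : (Finset.univ.filter fun q : Fin (Fintype.card V) => q.val < 3) =
      {⟨0, by omega⟩, ⟨1, by omega⟩, ⟨2, by omega⟩} := by
    ext q
    simp only [Finset.mem_filter, Finset.mem_univ, true_and, Finset.mem_insert,
      Finset.mem_singleton, Fin.ext_iff]
    omega
  have hcard3 : (Finset.univ.filter fun q : Fin (Fintype.card V) => q.val < 3).card = 3 := by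
    rw [hfilter3]
    rw [Finset.card_insert_of_notMem (by simp), Finset.card_insert_of_notMem (by simp),
      Finset.card_singleton]
  have hsum1 : ∑ q ∈ Finset.univ.filter (fun q : Fin (Fintype.card V) => q.val < 3), B q = 3 := by
    rw [hfilter3]
    rw [Finset.sum_insert (by simp), Finset.sum_insert (by simp), Finset.sum_singleton]
    rw [hBsmall _ (by simp), hBsmall _ (by simp), hBsmall _ (by simp)]
    simp
  have hcardbig : (Finset.univ.filter fun q : Fin (Fintype.card V) => ¬ q.val < 3).card = Fintype.card V - 3 := by
    have := Finset.card_filter_add_card_filter_not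
      (s := (Finset.univ : Finset (Fin (Fintype.card V)))) (p := fun q : Fin (Fintype.card V) => q.val < 3)
    rw [Finset.card_univ, Fintype.card_fin] at this
    omega
  have hsum2 : ∑ q ∈ Finset.univ.filter (fun q : Fin (Fintype.card V) => ¬ q.val < 3), B q = 2 * (Fintype.card V - 3) := by
    rw [Finset.sum_congr rfl (fun q hq => hBbig q (by
      simp only [Finset.mem_filter] at hq; omega))]
    rw [Finset.sum_const, hcardbig, smul_eq_mul]
    ring
  have hsumB : ∑ q : Fin (Fintype.card V), B q = 3 + 2 * (Fintype.card V - 3) := by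
    rw [← Finset.sum_filter_add_sum_filter_not Finset.univ (fun q : Fin (Fintype.card V) => q.val < 3),
      hsum1, hsum2]
  have : ∑ v : V, gdeg G v = 2 * (3 + 2 * (Fintype.card V - 3)) := by
    rw [step1, Finset.sum_congr rfl fun q _ => step2 q, Finset.sum_add_distrib, step3, hsumB]
    ring
  omega


private lemma ncard_setOf (p : V → Prop) [DecidablePred p] :
    {x | p x}.ncard = (Finset.univ.filter p).card := by
  rw [Set.ncard_eq_toFinset_card', Set.toFinset_setOf]

end Aux

theorem stmt8 {V : Type} [Fintype V] (G : SimpleGraph V) (n Δ : ℕ) (a b u v : V)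
    (hn : 6 ≤ n) (hcard : Fintype.card V = n)
    (h : IsStrongCentral G 2 Δ)
    (ha : gdeg G a = Δ) (hb : gdeg G b = Δ) (hab : a ≠ b)
    (hx2 : tail3 G Δ = 2)
    (hu3 : gdeg G u = 3) (hv3 : gdeg G v = 3) (huv : u ≠ v)
    (huS : u ≠ a ∧ u ≠ b ∧ G.Adj a u ∧ G.Adj b u)
    (hvS : v ≠ a ∧ v ≠ b ∧ G.Adj a v ∧ G.Adj b v) :
    ∃ u' v' : V, u' ≠ v' ∧
      (u' ≠ a ∧ u' ≠ b ∧ ¬(G.Adj a u' ∧ G.Adj b u')) ∧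
      (v' ≠ a ∧ v' ≠ b ∧ ¬(G.Adj a v' ∧ G.Adj b v')) ∧
      ((G.neighborSet u' = {a, u} ∧ G.neighborSet v' = {b, v}) ∨
       (G.neighborSet u' = {b, u} ∧ G.neighborSet v' = {a, v})) ∧
      gdeg G u' = 2 ∧ gdeg G v' = 2 := by
  classical
  letI : DecidableRel G.Adj := fun _ _ => Classical.dec _
  obtain ⟨htt, hmaxd, hcore2, hcoreadj, htail⟩ := h
  have hab' : G.Adj a b := hcoreadj a b ha hb hab
  have hNV : Fintype.card V = n := hcard
  -- the core set is exactly {a, b}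
  have hset : {w | gdeg G w = Δ} = {a, b} := by
    symm
    apply Set.eq_of_subset_of_ncard_le
    · intro w hw
      simp only [Set.mem_insert_iff, Set.mem_singleton_iff] at hw
      rcases hw with rfl | rfl
      · exact ha
      · exact hb
    · rw [hcore2, Set.ncard_pair hab]
    · exact Set.toFinite _
  have htailv : ∀ w : V, w ≠ a → w ≠ b → gdeg G w ≠ Δ := by
    intro w h1 h2 hw
    have hmem : w ∈ {w | gdeg G w = Δ} := hw
    rw [hset] at hmem
    simp only [Set.mem_insert_iff, Set.mem_singleton_iff] at hmem
    tauto
  -- counting : Δ = n - 2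
  have hsum := sum_gdeg (G := G) htt
  rw [hNV] at hsum
  set FD := Finset.univ.filter (fun w => gdeg G w = Δ) with hFD
  set F3 := Finset.univ.filter (fun w => gdeg G w ≠ Δ ∧ gdeg G w = 3) with hF3
  set F2 := Finset.univ.filter (fun w => gdeg G w ≠ Δ ∧ gdeg G w = 2) with hF2
  have hFDeq : FD = {a, b} := by
    ext w
    simp only [hFD, Finset.mem_filter, Finset.mem_univ, true_and, Finset.mem_insert,
      Finset.mem_singleton]
    constructor
    · intro hw
      have hmem : w ∈ {w | gdeg G w = Δ} := hw
      rw [hset] at hmem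
      simpa using hmem
    · rintro (rfl | rfl)
      · exact ha
      · exact hb
  have hF3card : F3.card = 2 := by
    unfold tail3 at hx2
    rw [hF3, ← ncard_setOf]
    exact hx2
  have hdisj1 : Disjoint FD F3 := by
    rw [Finset.disjoint_left]
    intro w hw1 hw2
    rw [hFD, Finset.mem_filter] at hw1
    rw [hF3, Finset.mem_filter] at hw2
    exact hw2.2.1 hw1.2
  have hdisj2 : Disjoint (FD ∪ F3) F2 := by
    rw [Finset.disjoint_left]
    intro w hw1 hw2
    rw [hF2, Finset.mem_filter] at hw2
    rw [Finset.mem_union] at hw1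
    rcases hw1 with hw1 | hw1
    · rw [hFD, Finset.mem_filter] at hw1
      exact hw2.2.1 hw1.2
    · rw [hF3, Finset.mem_filter] at hw1
      omega
  have huniv : FD ∪ F3 ∪ F2 = Finset.univ := by
    apply Finset.eq_univ_iff_forall.2
    intro w
    simp only [Finset.mem_union, hFD, hF3, hF2, Finset.mem_filter, Finset.mem_univ, true_and]
    by_cases hD : gdeg G w = Δ
    · exact Or.inl (Or.inl hD)
    · rcases htail w hD with h2 | h3'
      · exact Or.inr ⟨hD, h2⟩
      · exact Or.inl (Or.inr ⟨hD, h3'⟩)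
  have hcards : n = FD.card + F3.card + F2.card := by
    have h1 := Finset.card_union_of_disjoint hdisj2
    have h2 := Finset.card_union_of_disjoint hdisj1
    rw [huniv, Finset.card_univ, hNV, h2] at h1
    omega
  have hFDcard : FD.card = 2 := by
    rw [hFDeq]
    rw [Finset.card_insert_of_notMem (by simpa using hab), Finset.card_singleton]
  have hsumsplit : ∑ w : V, gdeg G w = (∑ w ∈ FD, gdeg G w) + (∑ w ∈ F3, gdeg G w)
      + (∑ w ∈ F2, gdeg G w) := by
    rw [← huniv, Finset.sum_union hdisj2, Finset.sum_union hdisj1]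
  have hsFD : ∑ w ∈ FD, gdeg G w = Δ + Δ := by
    rw [hFDeq, Finset.sum_pair hab, ha, hb]
  have hsF3 : ∑ w ∈ F3, gdeg G w = F3.card * 3 := by
    calc ∑ w ∈ F3, gdeg G w = ∑ _w ∈ F3, 3 := Finset.sum_congr rfl (fun w hw => by
          rw [hF3, Finset.mem_filter] at hw
          exact hw.2.2)
      _ = F3.card * 3 := by rw [Finset.sum_const, smul_eq_mul]
  have hsF2 : ∑ w ∈ F2, gdeg G w = F2.card * 2 := by
    calc ∑ w ∈ F2, gdeg G w = ∑ _w ∈ F2, 2 := Finset.sum_congr rfl (fun w hw => by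
          rw [hF2, Finset.mem_filter] at hw
          exact hw.2.2)
      _ = F2.card * 2 := by rw [Finset.sum_const, smul_eq_mul]
  have hΔ : Δ = n - 2 := by omega
  -- uniqueness of the non-neighbor of a core vertex
  have huniq : ∀ c z1 z2 : V, gdeg G c = Δ → z1 ≠ c → z2 ≠ c →
      ¬G.Adj c z1 → ¬G.Adj c z2 → z1 = z2 := by
    intro c z1 z2 hc h1 h2 hn1 hn2
    by_contra hne
    have hsub : (Finset.univ.filter fun w => G.Adj c w) ⊆ Finset.univ \ {c, z1, z2} := by
      intro w hw
      rw [Finset.mem_filter] at hw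
      rw [Finset.mem_sdiff]
      refine ⟨Finset.mem_univ w, ?_⟩
      simp only [Finset.mem_insert, Finset.mem_singleton]
      push_neg
      exact ⟨fun hh => G.irrefl (hh ▸ hw.2), fun hh => hn1 (hh ▸ hw.2),
        fun hh => hn2 (hh ▸ hw.2)⟩
    have hle := Finset.card_le_card hsub
    rw [← gdeg_eq_card_filter, Finset.card_sdiff_of_subset (Finset.subset_univ _), Finset.card_univ,
      hNV, hc] at hle
    have hc3 : ({c, z1, z2} : Finset V).card = 3 := by
      rw [Finset.card_insert_of_notMem (by
        simp only [Finset.mem_insert, Finset.mem_singleton]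
        push_neg
        exact ⟨Ne.symm h1, Ne.symm h2⟩),
        Finset.card_insert_of_notMem (by simpa using hne), Finset.card_singleton]
    rw [hc3] at hle
    omega
  -- third neighbors
  have hthird : ∀ z : V, gdeg G z = 3 → G.Adj a z → G.Adj b z →
      ∃ x : V, x ≠ a ∧ x ≠ b ∧ G.Adj z x ∧ ∀ w, G.Adj z w → w = a ∨ w = b ∨ w = x := by
    intro z hz haz hbz
    have hfin : (G.neighborSet z).Finite := Set.toFinite _
    have hsub : ({a, b} : Set V) ⊆ G.neighborSet z := by
      intro w hw
      simp only [Set.mem_insert_iff, Set.mem_singleton_iff] at hw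
      rcases hw with rfl | rfl
      · exact haz.symm
      · exact hbz.symm
    have hdiff : (G.neighborSet z \ {a, b}).ncard = 1 := by
      rw [Set.ncard_diff hsub (Set.toFinite _), Set.ncard_pair hab]
      rw [show (G.neighborSet z).ncard = 3 from hz]
    obtain ⟨x, hx⟩ := Set.ncard_eq_one.1 hdiff
    have hxmem : x ∈ G.neighborSet z \ {a, b} := by rw [hx]; exact Set.mem_singleton x
    refine ⟨x, ?_, ?_, hxmem.1, ?_⟩
    · exact fun hh => hxmem.2 (by simp [hh])
    · exact fun hh => hxmem.2 (by simp [hh])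
    · intro w hw
      by_cases h1 : w = a
      · exact Or.inl h1
      by_cases h2 : w = b
      · exact Or.inr (Or.inl h2)
      have hwmem : w ∈ G.neighborSet z \ {a, b} := ⟨hw, by simp [h1, h2]⟩
      rw [hx] at hwmem
      exact Or.inr (Or.inr hwmem)
  obtain ⟨x, hxa, hxb, hux, hallu⟩ := hthird u hu3 huS.2.2.1 huS.2.2.2
  obtain ⟨y, hya, hyb, hvy, hallv⟩ := hthird v hv3 hvS.2.2.1 hvS.2.2.2
  -- x adjacent to at least one of a, b; and not both
  have hxor : G.Adj a x ∨ G.Adj b x := by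
    obtain ⟨w, hw1, hw2⟩ := edge_in_triangle htt hux
    rcases hallu w hw1 with rfl | rfl | rfl
    · exact Or.inl hw2.symm
    · exact Or.inr hw2.symm
    · exact absurd hw2 (G.irrefl)
  have hyor : G.Adj a y ∨ G.Adj b y := by
    obtain ⟨w, hw1, hw2⟩ := edge_in_triangle htt hvy
    rcases hallv w hw1 with rfl | rfl | rfl
    · exact Or.inl hw2.symm
    · exact Or.inr hw2.symm
    · exact absurd hw2 (G.irrefl)
  have hnboth_x : ¬(G.Adj a x ∧ G.Adj b x) := by
    rintro ⟨h1, h2⟩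
    exact no_K4 htt huS.2.2.1.symm huS.2.2.2.symm hux hab' h1 h2
  have hnboth_y : ¬(G.Adj a y ∧ G.Adj b y) := by
    rintro ⟨h1, h2⟩
    exact no_K4 htt hvS.2.2.1.symm hvS.2.2.2.symm hvy hab' h1 h2
  have hxv : x ≠ v := by
    rintro rfl
    exact hnboth_x ⟨hvS.2.2.1, hvS.2.2.2⟩
  have hyu : y ≠ u := by
    rintro rfl
    exact hnboth_y ⟨huS.2.2.1, huS.2.2.2⟩
  -- tail vertices other than u, v have degree ≠ 3
  have hΔ4 : 4 ≤ Δ := by omega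
  have hnot3 : ∀ z : V, z ≠ u → z ≠ v → gdeg G z ≠ Δ → gdeg G z ≠ 3 := by
    intro z h1 h2 h3' h4
    have hsub : ({u, v, z} : Set V) ⊆ {w | gdeg G w ≠ Δ ∧ gdeg G w = 3} := by
      intro w hw
      simp only [Set.mem_insert_iff, Set.mem_singleton_iff] at hw
      rcases hw with rfl | rfl | rfl
      · exact ⟨by omega, hu3⟩
      · exact ⟨by omega, hv3⟩
      · exact ⟨h3', h4⟩
    have hle := Set.ncard_le_ncard hsub (Set.toFinite _)
    rw [ncard_triple huv (Ne.symm h1) (Ne.symm h2)] at hle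
    unfold tail3 at hx2
    omega
  have hx2' : gdeg G x = 2 := by
    have ht' : gdeg G x ≠ Δ := htailv x hxa hxb
    rcases htail x ht' with h2 | h3'
    · exact h2
    · exact absurd h3' (hnot3 x hux.ne' hxv ht')
  have hy2' : gdeg G y = 2 := by
    have ht' : gdeg G y ≠ Δ := htailv y hya hyb
    rcases htail y ht' with h2 | h3'
    · exact h2
    · exact absurd h3' (hnot3 y hyu hvy.ne' ht')
  have hxy : x ≠ y := by
    rintro rfl
    have hc : G.Adj x a ∨ G.Adj x b := by
      rcases hxor with h1 | h1
      · exact Or.inl h1.symm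
      · exact Or.inr h1.symm
    have key : ∀ c : V, G.Adj x c → c ≠ u → c ≠ v → False := by
      intro c hc' h1 h2
      have hsub : ({u, v, c} : Set V) ⊆ G.neighborSet x := by
        intro w hw
        simp only [Set.mem_insert_iff, Set.mem_singleton_iff] at hw
        rcases hw with rfl | rfl | rfl
        · exact hux.symm
        · exact hvy.symm
        · exact hc'
      have hle := Set.ncard_le_ncard hsub (Set.toFinite _)
      rw [ncard_triple huv (Ne.symm h1) (Ne.symm h2)] at hle
      have : (G.neighborSet x).ncard = 2 := hx2'
      omega
    rcases hc with h1 | h1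
    · exact key a h1 (Ne.symm huS.1) (Ne.symm hvS.1)
    · exact key b h1 (Ne.symm huS.2.1) (Ne.symm hvS.2.1)
  -- final case split
  have hNset : ∀ (z w c : V), gdeg G z = 2 → G.Adj z c → G.Adj z w → c ≠ w →
      G.neighborSet z = {c, w} := by
    intro z w c hz h1 h2 hcw
    symm
    apply Set.eq_of_subset_of_ncard_le
    · intro t ht'
      simp only [Set.mem_insert_iff, Set.mem_singleton_iff] at ht'
      rcases ht' with rfl | rfl
      · exact h1
      · exact h2
    · rw [Set.ncard_pair hcw]
      rw [show (G.neighborSet z).ncard = 2 from hz]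
    · exact Set.toFinite _
  rcases hxor with hax | hbx
  · -- x ~ a : u' = x gets {a, u}, v' = y gets {b, v}
    have hnbx : ¬ G.Adj b x := fun hh => hnboth_x ⟨hax, hh⟩
    have hby : G.Adj b y := by
      rcases hyor with hay | hby
      · have hnby : ¬ G.Adj b y := fun hh => hnboth_y ⟨hay, hh⟩
        exact absurd (huniq b x y hb hxb hyb hnbx hnby) hxy
      · exact hby
    have hnay : ¬ G.Adj a y := fun hh => hnboth_y ⟨hh, hby⟩
    refine ⟨x, y, hxy, ⟨hxa, hxb, fun hh => hnboth_x hh⟩, ⟨hya, hyb, fun hh => hnboth_y hh⟩,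
      Or.inl ⟨?_, ?_⟩, hx2', hy2'⟩
    · exact hNset x u a hx2' hax.symm hux.symm (Ne.symm huS.1)
    · exact hNset y v b hy2' hby.symm hvy.symm (Ne.symm hvS.2.1)
  · -- x ~ b : u' = x gets {b, u}, v' = y gets {a, v}
    have hnax : ¬ G.Adj a x := fun hh => hnboth_x ⟨hh, hbx⟩
    have hay : G.Adj a y := by
      rcases hyor with hay | hby
      · exact hay
      · have hnay : ¬ G.Adj a y := fun hh => hnboth_y ⟨hh, hby⟩
        exact absurd (huniq a x y ha hxa hya hnax hnay) hxy
    have hnby : ¬ G.Adj b y := fun hh => hnboth_y ⟨hay, hh⟩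
    refine ⟨x, y, hxy, ⟨hxa, hxb, fun hh => hnboth_x hh⟩, ⟨hya, hyb, fun hh => hnboth_y hh⟩,
      Or.inr ⟨?_, ?_⟩, hx2', hy2'⟩
    · exact hNset x u b hx2' hbx.symm hux.symm (Ne.symm huS.2.1)
    · exact hNset y v a hy2' hay.symm hvy.symm (Ne.symm hvS.1)
end
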